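/- arXiv:2411.19823 — 7 statements merged into one kernel-verified Lean document; each statement's English description precedes it below -/
import Mathlib

section
/- For every 2-coloring of the triples of [N] with N ≥ binom(2n,n)+2, there exists a monochromatic tight monotone path of length n, i.e. vertices v_1 < v_2 < ... < v_{n+2} such that all triples {v_i, v_{i+1}, v_{i+2}} receive the same color. -/
open Finset

private lemma two_points {S : Finset ℕ} (h : 2 ≤ S.card) :
    ∃ a b, a ∈ S ∧ b ∈ S ∧ a < b := by
  obtain ⟨a, ha, b, hb, hab⟩ := Finset.one_lt_card.mp h
  rcases lt_or_gt_of_ne hab with h' | h'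
  · exact ⟨a, b, ha, hb, h'⟩
  · exact ⟨b, a, hb, ha, h'⟩

private lemma cups_caps_key (Δ : ℕ → ℕ → ℕ → Fin 2) :
    ∀ m k l (S : Finset ℕ), k + l ≤ m → Nat.choose (k + l) k + 1 ≤ S.card →
    (∃ v : ℕ → ℕ, (∀ i ≤ k + 1, v i ∈ S) ∧ (∀ i < k + 1, v i < v (i+1)) ∧
      (∀ i < k, Δ (v i) (v (i+1)) (v (i+2)) = 0)) ∨
    (∃ v : ℕ → ℕ, (∀ i ≤ l + 1, v i ∈ S) ∧ (∀ i < l + 1, v i < v (i+1)) ∧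
      (∀ i < l, Δ (v i) (v (i+1)) (v (i+2)) = 1)) := by
  intro m
  induction m with
  | zero =>
    intro k l S hm hc
    obtain ⟨rfl, rfl⟩ : k = 0 ∧ l = 0 := by omega
    simp only [Nat.choose_self] at hc
    obtain ⟨a, b, ha, hb, hab⟩ := two_points hc
    refine Or.inl ⟨fun i => if i = 0 then a else b, ?_, ?_, ?_⟩
    · intro i _; dsimp only; split <;> assumption
    · intro i hi; interval_cases i; simpa using hab
    · intro i hi; omega
  | succ m ih =>
    intro k l S hm hc
    classical
    rcases k with _ | a
    · -- k = 0 : any two points form a 0-path of length 0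
      simp only [Nat.zero_add, Nat.choose_zero_right] at hc
      obtain ⟨x, y, hx, hy, hxy⟩ := two_points hc
      refine Or.inl ⟨fun i => if i = 0 then x else y, ?_, ?_, ?_⟩
      · intro i _; dsimp only; split <;> assumption
      · intro i hi; interval_cases i; simpa using hxy
      · intro i hi; omega
    rcases l with _ | b
    · -- l = 0
      simp only [Nat.add_zero, Nat.choose_self] at hc
      obtain ⟨x, y, hx, hy, hxy⟩ := two_points hc
      refine Or.inr ⟨fun i => if i = 0 then x else y, ?_, ?_, ?_⟩
      · intro i _; dsimp only; split <;> assumption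
      · intro i hi; interval_cases i; simpa using hxy
      · intro i hi; omega
    -- both ≥ 1
    set P : ℕ → Prop := fun p => ∃ u : ℕ → ℕ,
        (∀ i ≤ a + 1, u i ∈ S) ∧ (∀ i < a + 1, u i < u (i+1)) ∧
        (∀ i < a, Δ (u i) (u (i+1)) (u (i+2)) = 0) ∧ u (a+1) = p with hP
    set E := S.filter P with hE
    set F := S.filter (fun p => ¬ P p) with hF
    have hcard : E.card + F.card = S.card := Finset.card_filter_add_card_filter_not _
    by_cases h1 : Nat.choose (a + (b+1)) a + 1 ≤ F.card
    · -- apply IH to F with (a, b+1)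
      rcases ih a (b+1) F (by omega) h1 with ⟨u, hmem, hmono, hcol⟩ | ⟨w, hmem, hmono, hcol⟩
      · -- impossible: the endpoint of u is in F but satisfies P
        exfalso
        have hend : u (a+1) ∈ F := hmem (a+1) le_rfl
        have hmemS : ∀ i ≤ a + 1, u i ∈ S := fun i hi =>
          (Finset.mem_filter.mp (hmem i hi)).1
        have : P (u (a+1)) := ⟨u, hmemS, hmono, hcol, rfl⟩
        exact (Finset.mem_filter.mp hend).2 this
      · exact Or.inr ⟨w, fun i hi => (Finset.mem_filter.mp (hmem i hi)).1, hmono, hcol⟩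
    · -- E is large; apply IH to E with (a+1, b)
      have hEcard : Nat.choose ((a+1) + b) (a+1) + 1 ≤ E.card := by
        have hp : Nat.choose (a + b + 1 + 1) (a + 1)
            = Nat.choose (a + b + 1) a + Nat.choose (a + b + 1) (a + 1) :=
          Nat.choose_succ_succ (a + b + 1) a
        have h2 : Nat.choose (a + b + 1 + 1) (a + 1) + 1 ≤ S.card := by
          rw [show a + b + 1 + 1 = a + 1 + (b + 1) by ring]; exact hc
        have h1' : ¬ (Nat.choose (a + b + 1) a + 1 ≤ F.card) := by
          rw [show a + b + 1 = a + (b + 1) by ring]; exact h1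
        rw [show a + 1 + b = a + b + 1 by ring]
        omega
      rcases ih (a+1) b E (by omega) hEcard with ⟨v, hmem, hmono, hcol⟩ | ⟨w, hmem, hmono, hcol⟩
      · exact Or.inl ⟨v, fun i hi => (Finset.mem_filter.mp (hmem i hi)).1, hmono, hcol⟩
      · -- w is a 1-path of length b in E; w 0 ∈ E so it ends a 0-path of length a
        have hw0 : w 0 ∈ E := hmem 0 (by omega)
        obtain ⟨u, humem, humono, hucol, huend⟩ := (Finset.mem_filter.mp hw0).2
        have hxp : u a < u (a+1) := humono a (by omega)
        have hpy : w 0 < w 1 := hmono 0 (by omega)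
        have fin2 : ∀ x : Fin 2, x = 0 ∨ x = 1 := by decide
        rcases fin2 (Δ (u a) (u (a+1)) (w 1)) with hΔ | hΔ
        · -- extend u by w 1 to a 0-path of length a+1
          refine Or.inl ⟨fun i => if i ≤ a + 1 then u i else w 1, ?_, ?_, ?_⟩
          · intro i hi; dsimp only; split
            · exact humem i (by omega)
            · exact (Finset.mem_filter.mp (hmem 1 (by omega))).1
          · intro i hi; dsimp only
            rcases Nat.lt_or_ge i (a+1) with h' | h'
            · rw [if_pos (by omega), if_pos (by omega)]; exact humono i h'
            · have : i = a + 1 := by omega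
              subst this
              rw [if_pos le_rfl, if_neg (by omega), huend]; exact hpy
          · intro i hi; dsimp only
            rcases Nat.lt_or_ge i a with h' | h'
            · rw [if_pos (by omega), if_pos (by omega), if_pos (by omega)]
              exact hucol i h'
            · have : i = a := by omega
              subst this
              rw [if_pos (by omega), if_pos (by omega), if_neg (by omega)]
              exact hΔ
        · -- extend w to the left by u a to a 1-path of length b+1
          refine Or.inr ⟨fun i => if i = 0 then u a else w (i - 1), ?_, ?_, ?_⟩
          · intro i hi; dsimp only; split
            · exact humem a (by omega)
            · exact (Finset.mem_filter.mp (hmem (i-1) (by omega))).1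
          · intro i hi; dsimp only
            rcases Nat.eq_zero_or_pos i with rfl | h'
            · rw [if_pos rfl, if_neg (by omega)]
              simpa [huend] using hxp
            · rw [if_neg (by omega), if_neg (by omega)]
              have : i - 1 + 1 = i ∧ i + 1 - 1 = i := by omega
              rw [show i + 1 - 1 = i from this.2]
              have := hmono (i-1) (by omega)
              rwa [show i - 1 + 1 = i by omega] at this
          · intro i hi; dsimp only
            rcases Nat.eq_zero_or_pos i with rfl | h'
            · rw [if_pos rfl, if_neg (by omega), if_neg (by omega)]
              simpa [huend] using hΔ
            · rw [if_neg (by omega), if_neg (by omega), if_neg (by omega),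
                show i + 1 - 1 = i by omega, show i + 2 - 1 = i + 1 by omega]
              have := hcol (i-1) (by omega)
              rwa [show i - 1 + 1 = i by omega, show i - 1 + 2 = i + 1 by omega] at this


/-- **Erdős–Szekeres cups–caps bound**, in the language of monotone paths:
for every 2-coloring of the triples of `[N]` (identified with `{0, …, N-1}`)
with `N ≥ binom(2n, n) + 2`, there is a monochromatic tight monotone path of
length `n`, i.e. vertices `v 0 < v 1 < ⋯ < v (n+1)` in `[N]` all of whose
consecutive triples receive the same color. -/
theorem cups_caps_monochromatic_tight_path (n N : ℕ)
    (hN : Nat.choose (2 * n) n + 2 ≤ N) (Δ : ℕ → ℕ → ℕ → Fin 2) :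
    ∃ (v : ℕ → ℕ) (c : Fin 2),
      (∀ i < n + 1, v i < v (i + 1)) ∧ (∀ i ≤ n + 1, v i < N) ∧
      (∀ i < n, Δ (v i) (v (i + 1)) (v (i + 2)) = c) := by
  have hc : Nat.choose (n + n) n + 1 ≤ (Finset.range N).card := by
    rw [Finset.card_range, show n + n = 2 * n by ring]; omega
  rcases cups_caps_key Δ (n + n) n n (Finset.range N) le_rfl hc with
    ⟨v, hmem, hmono, hcol⟩ | ⟨v, hmem, hmono, hcol⟩
  · exact ⟨v, 0, hmono, fun i hi => Finset.mem_range.mp (hmem i hi), hcol⟩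
  · exact ⟨v, 1, hmono, fun i hi => Finset.mem_range.mp (hmem i hi), hcol⟩
end

section
/- For every K ≥ 2 there is a constant C such that every K-majority tournament has a dominating set of size at most C·K·log K. -/
/-!
Von Neumann's minimax theorem, applied to the skew-symmetric payoff matrix of the tournament,
gives a probability distribution `p` on the vertices such that every vertex `y` together with
its in-neighbours carries `p`-mass at least `1/2`. For a `K`-majority tournament these closed
in-neighbourhoods are the sets `{x | K ≤ #{i | y ≼ᵢ x}}`, and their trace on a set `S` is
determined by the `2K - 1` numbers `#{x ∈ S | y ≼ᵢ x}`, so there are at most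
`(|S| + 1) ^ (2K - 1)` traces. The ε-net theorem, proved by double sampling and swapping
coordinates, then yields `O(K log K)` vertices meeting every closed in-neighbourhood; they form a
dominating set.
-/

open Finset Matrix

theorem exists_mem_stdSimplex_mulVec_nonneg {V : Type*} [Fintype V] [Nonempty V]
    (A : Matrix V V ℝ) (hA : Aᵀ = -A) : ∃ p ∈ stdSimplex ℝ V, 0 ≤ A *ᵥ p := by
  classical
  have hne : (stdSimplex ℝ V).Nonempty := ⟨_, single_mem_stdSimplex ℝ (Classical.arbitrary V)⟩
  obtain ⟨a, ha, b, hb, hsaddle⟩ := Sion.exists_isSaddlePointOn (f := fun x y => x ⬝ᵥ (A *ᵥ y))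
    hne (convex_stdSimplex ℝ V) (isCompact_stdSimplex ℝ V)
    (fun y _ => (by fun_prop : Continuous fun x : V → ℝ => x ⬝ᵥ (A *ᵥ y))
      |>.lowerSemicontinuous.lowerSemicontinuousOn _)
    (fun y _ => ((dotProductBilin ℝ ℝ).flip (A *ᵥ y)).convexOn (convex_stdSimplex ℝ V)
      |>.quasiconvexOn)
    (convex_stdSimplex ℝ V) hne (isCompact_stdSimplex ℝ V)
    (fun x _ => (by fun_prop : Continuous fun y : V → ℝ => x ⬝ᵥ (A *ᵥ y))
      |>.upperSemicontinuous.upperSemicontinuousOn _)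
    (fun x _ => (dotProductBilin ℝ ℝ x ∘ₗ A.mulVecLin).concaveOn (convex_stdSimplex ℝ V)
      |>.quasiconcaveOn)
  have hself : a ⬝ᵥ (A *ᵥ a) = 0 := by
    have : a ⬝ᵥ (A *ᵥ a) = -(a ⬝ᵥ (A *ᵥ a)) := by
      conv_lhs => rw [dotProduct_mulVec, ← mulVec_transpose, hA, dotProduct_comm]
      simp [neg_mulVec]
    linarith
  refine ⟨b, hb, fun i => ?_⟩
  simpa [hself] using hsaddle _ (single_mem_stdSimplex ℝ i) a ha

section Tournament

variable {V : Type*} (T : V → V → Prop) [DecidableRel T]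

/-- `(tournamentMatrix T *ᵥ p) y` is the `p`-mass of the in-neighbours of `y` minus that of its
out-neighbours. -/
def tournamentMatrix : Matrix V V ℝ :=
  of fun y x => (if T x y then 1 else 0) - (if T y x then 1 else 0)

lemma tournamentMatrix_transpose : (tournamentMatrix T)ᵀ = -tournamentMatrix T := by
  ext; simp [tournamentMatrix]

lemma exists_mem_stdSimplex_half_le_sum [Fintype V] [DecidableEq V] [Nonempty V]
    (htot : ∀ x y, x ≠ y → T x y ∨ T y x) :
    ∃ p ∈ stdSimplex ℝ V, ∀ y, 1 / 2 ≤ ∑ x with x = y ∨ T x y, p x := by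
  obtain ⟨p, hp, hpay⟩ :=
    exists_mem_stdSimplex_mulVec_nonneg (tournamentMatrix T) (tournamentMatrix_transpose T)
  refine ⟨p, hp, fun y => ?_⟩
  have hpoint (x : V) : 1 + tournamentMatrix T y x ≤ 2 * if x = y ∨ T x y then 1 else 0 := by
    have := htot x y
    simp only [tournamentMatrix, of_apply]
    split_ifs <;> simp_all [one_add_one_eq_two]
  have : 1 ≤ 2 * ∑ x with x = y ∨ T x y, p x := calc
    1 ≤ ∑ x, p x + (tournamentMatrix T *ᵥ p) y := by rw [hp.2]; simpa using hpay y
    _ = ∑ x, p x * (1 + tournamentMatrix T y x) := by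
        simp [mulVec, dotProduct, mul_add, sum_add_distrib, mul_comm]
    _ ≤ ∑ x, p x * (2 * if x = y ∨ T x y then 1 else 0) :=
        sum_le_sum fun x _ => mul_le_mul_of_nonneg_left (hpoint x) (hp.1 x)
    _ = 2 * ∑ x with x = y ∨ T x y, p x := by
        rw [mul_sum, sum_filter]
        exact sum_congr rfl fun x _ => by split_ifs <;> ring
  linarith

end Tournament

section Sampling

variable {V : Type*} {p : V → ℝ} {m : ℕ}

variable (p) in
def sampleWeight (s : Fin m → V) : ℝ := ∏ j, p (s j)

lemma sampleWeight_nonneg (hp : ∀ v, 0 ≤ p v) (s : Fin m → V) : 0 ≤ sampleWeight p s :=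
  prod_nonneg fun j _ => hp (s j)

variable [Fintype V]

lemma sum_sampleWeight (hp : ∑ v, p v = 1) : ∑ s : Fin m → V, sampleWeight p s = 1 := by
  simp [sampleWeight, ← Fintype.sum_pow, hp]

lemma sum_sampleWeight_mul_apply (hp : ∑ v, p v = 1) (j : Fin m) (g : V → ℝ) :
    ∑ s : Fin m → V, sampleWeight p s * g (s j) = ∑ v, p v * g v := by
  have hsplit (s : Fin m → V) : sampleWeight p s * g (s j) =
      ∏ i, (if i = j then p (s i) * g (s i) else p (s i)) := by
    rw [sampleWeight, prod_ite, filter_eq', filter_ne', if_pos (mem_univ j), prod_singleton,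
      ← mul_prod_erase univ _ (mem_univ j)]
    ring
  simp_rw [hsplit, ← Fintype.prod_sum (fun i v => if i = j then p v * g v else p v)]
  rw [prod_eq_single j (fun i _ hij => by simp [hij, hp]) (by simp)]
  simp

variable [DecidableEq V]

lemma sum_sampleWeight_mul_card_hits (hp : ∑ v, p v = 1) (c : Finset V) :
    ∑ s : Fin m → V, sampleWeight p s * #{j | s j ∈ c} = m * ∑ v ∈ c, p v := by
  have hind (j : Fin m) : ∑ s : Fin m → V, sampleWeight p s * (if s j ∈ c then 1 else 0) =
      ∑ v ∈ c, p v := by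
    rw [sum_sampleWeight_mul_apply hp j fun v => if v ∈ c then 1 else 0]
    simp_rw [mul_ite, mul_one, mul_zero]
    rw [sum_ite_mem, univ_inter]
  simp_rw [card_filter, Nat.cast_sum, Nat.cast_ite, Nat.cast_one, Nat.cast_zero, mul_sum]
  rw [sum_comm]
  simp only [hind, sum_const, card_univ, Fintype.card_fin, nsmul_eq_mul, mul_sum]

/-- A reverse Markov inequality: the number of hits is below `r` or at most `m`. -/
lemma mul_sum_sub_le_mul_sum_sampleWeight (hp0 : ∀ v, 0 ≤ p v) (hp1 : ∑ v, p v = 1)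
    (c : Finset V) (r : ℕ) :
    m * ∑ v ∈ c, p v - r ≤ m * ∑ s : Fin m → V with r ≤ #{j | s j ∈ c}, sampleWeight p s := by
  have hpoint (s : Fin m → V) :
      (#{j | s j ∈ c} : ℝ) ≤ r + m * if r ≤ #{j | s j ∈ c} then 1 else 0 := by
    have : #{j | s j ∈ c} ≤ m := (card_filter_le _ _).trans (by simp)
    split_ifs with h
    · have : (#{j | s j ∈ c} : ℝ) ≤ m := by exact_mod_cast this
      linarith [(Nat.cast_nonneg r : (0 : ℝ) ≤ r)]
    · simp only [mul_zero, add_zero, Nat.cast_le]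
      omega
  calc m * ∑ v ∈ c, p v - r
      = ∑ s : Fin m → V, sampleWeight p s * #{j | s j ∈ c} -
          r * ∑ s : Fin m → V, sampleWeight p s := by
        rw [sum_sampleWeight_mul_card_hits hp1, sum_sampleWeight hp1, mul_one]
    _ ≤ ∑ s : Fin m → V, sampleWeight p s * (m * if r ≤ #{j | s j ∈ c} then 1 else 0) := by
        rw [mul_sum, ← sum_sub_distrib]
        gcongr with s
        nlinarith [hpoint s, sampleWeight_nonneg hp0 s]
    _ = _ := by
        rw [mul_sum, sum_filter]
        exact sum_congr rfl fun s _ => by split_ifs <;> ring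

end Sampling

section Symmetrization

variable {V : Type*} {m : ℕ}

def swapAt (σ : Fin m → Bool) (x : (Fin m → V) × (Fin m → V)) : (Fin m → V) × (Fin m → V) :=
  (fun j => if σ j then x.2 j else x.1 j, fun j => if σ j then x.1 j else x.2 j)

lemma swapAt_involutive (σ : Fin m → Bool) : Function.Involutive (swapAt (V := V) σ) :=
  fun x => by ext j <;> by_cases h : σ j <;> simp [swapAt, h]

lemma sampleWeight_swapAt (p : V → ℝ) (σ : Fin m → Bool) (x : (Fin m → V) × (Fin m → V)) :
    sampleWeight p (swapAt σ x).1 * sampleWeight p (swapAt σ x).2 =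
      sampleWeight p x.1 * sampleWeight p x.2 := by
  simp only [sampleWeight, ← prod_mul_distrib]
  exact prod_congr rfl fun j _ => by by_cases h : σ j <;> simp [swapAt, h, mul_comm]

lemma two_pow_mul_sum_le_of_card_swapAt_le [Fintype V] {p : V → ℝ} (hp0 : ∀ v, 0 ≤ p v)
    (hp1 : ∑ v, p v = 1) (E : (Fin m → V) × (Fin m → V) → Prop) [DecidablePred E] (N : ℕ)
    (hN : ∀ x, #{σ | E (swapAt σ x)} ≤ N) :
    2 ^ m * ∑ x with E x, sampleWeight p x.1 * sampleWeight p x.2 ≤ N := by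
  have hinv (σ : Fin m → Bool) : ∑ x with E x, sampleWeight p x.1 * sampleWeight p x.2 =
      ∑ x with E (swapAt σ x), sampleWeight p x.1 * sampleWeight p x.2 := by
    simp only [sum_filter]
    refine (Fintype.sum_bijective _ (swapAt_involutive σ).bijective _ _ fun x => ?_).symm
    rw [sampleWeight_swapAt]
  calc 2 ^ m * ∑ x with E x, sampleWeight p x.1 * sampleWeight p x.2
      = ∑ σ : Fin m → Bool, ∑ x with E (swapAt σ x), sampleWeight p x.1 * sampleWeight p x.2 := by
        simp [← hinv]
    _ = ∑ x, sampleWeight p x.1 * sampleWeight p x.2 * #{σ | E (swapAt σ x)} := by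
        simp only [sum_filter, card_filter, Nat.cast_sum, Nat.cast_ite, mul_sum]
        rw [sum_comm]
        simp
    _ ≤ ∑ x : (Fin m → V) × (Fin m → V), sampleWeight p x.1 * sampleWeight p x.2 * N := by
        gcongr with x
        · exact mul_nonneg (sampleWeight_nonneg hp0 _) (sampleWeight_nonneg hp0 _)
        · exact_mod_cast hN x
    _ = N := by
        rw [← sum_mul, Fintype.sum_prod_type]
        simp [← mul_sum, sum_sampleWeight hp1]

end Symmetrization

lemma card_filter_forall_mem_eq {m : ℕ} (J : Finset (Fin m)) (g : Fin m → Bool) :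
    #{σ : Fin m → Bool | ∀ j ∈ J, σ j = g j} = 2 ^ (m - #J) := by
  have : ({σ : Fin m → Bool | ∀ j ∈ J, σ j = g j} : Finset _) =
      Fintype.piFinset fun j => if j ∈ J then {g j} else univ := by
    ext σ
    simp only [mem_filter, mem_univ, true_and, Fintype.mem_piFinset]
    exact ⟨fun h j => by split_ifs with hj <;> simp [h j, hj],
      fun h j hj => by simpa [hj] using h j⟩
  rw [this, Fintype.card_piFinset]
  simp_rw [apply_ite card, card_singleton, card_univ, Fintype.card_bool]
  rw [prod_ite, prod_const, prod_const]
  simp [filter_not, card_sdiff]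

section Counting

variable {V : Type*} [DecidableEq V] {m : ℕ}

def MissesThenHits (c : Finset V) (r : ℕ) (x : (Fin m → V) × (Fin m → V)) : Prop :=
  (∀ j, x.1 j ∉ c) ∧ r ≤ #{j | x.2 j ∈ c}

instance (c : Finset V) (r : ℕ) : DecidablePred (MissesThenHits (m := m) c r) :=
  fun _ => inferInstanceAs (Decidable (_ ∧ _))

lemma card_swapAt_missesThenHits_le (c : Finset V) (r : ℕ) (x : (Fin m → V) × (Fin m → V)) :
    #{σ | MissesThenHits c r (swapAt σ x)} ≤ 2 ^ (m - r) := by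
  set Φ : Finset (Fin m → Bool) := {σ | MissesThenHits c r (swapAt σ x)}
  obtain hempty | ⟨σ₀, hσ₀⟩ := Φ.eq_empty_or_nonempty
  · simp [hempty]
  set J : Finset (Fin m) := {j | x.1 j ∈ c ∨ x.2 j ∈ c}
  have hrJ : r ≤ #J := by
    refine (mem_filter.1 hσ₀).2.2.trans (card_le_card fun j hj => ?_)
    rw [mem_filter] at hj
    simp only [swapAt] at hj
    simp only [J, mem_filter, mem_univ, true_and]
    split_ifs at hj <;> tauto
  -- the first sample after swapping avoids `c`, which fixes `σ` on `J`
  have hforced : Φ ⊆ ({σ : Fin m → Bool | ∀ j ∈ J, σ j = decide (x.1 j ∈ c)} : Finset _) := by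
    intro σ hσ
    rw [mem_filter] at hσ ⊢
    refine ⟨mem_univ σ, fun j hj => ?_⟩
    have := hσ.2.1 j
    simp only [J, mem_filter, mem_univ, true_and] at hj
    simp only [swapAt] at this
    cases h : σ j <;> simp_all
  calc #Φ ≤ _ := card_le_card hforced
    _ = 2 ^ (m - #J) := card_filter_forall_mem_eq J _
    _ ≤ 2 ^ (m - r) := Nat.pow_le_pow_right two_pos (by omega)

lemma missesThenHits_inter_iff {S c : Finset V} {r : ℕ} {x : (Fin m → V) × (Fin m → V)}
    (hS : ∀ j, x.1 j ∈ S ∧ x.2 j ∈ S) :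
    MissesThenHits (S ∩ c) r x ↔ MissesThenHits c r x := by
  simp only [MissesThenHits, mem_inter, (hS _).1, (hS _).2, true_and]

lemma swapAt_mem_union (σ : Fin m → Bool) (x : (Fin m → V) × (Fin m → V)) (j : Fin m) :
    (swapAt σ x).1 j ∈ univ.image x.1 ∪ univ.image x.2 ∧
      (swapAt σ x).2 j ∈ univ.image x.1 ∪ univ.image x.2 := by
  by_cases h : σ j <;> simp [swapAt, h]

def numTraces {ι : Type*} [Fintype ι] (B : ι → Finset V) (S : Finset V) : ℕ :=
  #(univ.image fun i => S ∩ B i)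

lemma card_swapAt_exists_missesThenHits_le {ι : Type*} [Fintype ι] (B : ι → Finset V) (r : ℕ)
    (x : (Fin m → V) × (Fin m → V)) :
    #{σ | ∃ i, MissesThenHits (B i) r (swapAt σ x)} ≤
      numTraces B (univ.image x.1 ∪ univ.image x.2) * 2 ^ (m - r) := by
  set S := univ.image x.1 ∪ univ.image x.2
  -- all sample points lie in `S`, so only the trace `S ∩ B i` matters
  have hsub : ({σ | ∃ i, MissesThenHits (B i) r (swapAt σ x)} : Finset _) ⊆
      (univ.image fun i => S ∩ B i).biUnion fun c => {σ | MissesThenHits c r (swapAt σ x)} := by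
    intro σ hσ
    obtain ⟨i, hi⟩ := (mem_filter.1 hσ).2
    exact mem_biUnion.2 ⟨S ∩ B i, mem_image_of_mem _ (mem_univ i),
      mem_filter.2 ⟨mem_univ σ, (missesThenHits_inter_iff (swapAt_mem_union σ x)).2 hi⟩⟩
  calc _ ≤ _ := card_le_card hsub
    _ ≤ _ := card_biUnion_le
    _ ≤ _ := sum_le_card_nsmul _ _ _ fun c _ => card_swapAt_missesThenHits_le c r x
    _ = _ := smul_eq_mul ..

end Counting

theorem exists_hitting_sample {V ι : Type*} [Fintype V] [DecidableEq V] [Fintype ι]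
    {p : V → ℝ} (hp0 : ∀ v, 0 ≤ p v) (hp1 : ∑ v, p v = 1) (B : ι → Finset V) {D : ℕ}
    (hB : ∀ S, numTraces B S ≤ (#S + 1) ^ D) {ε : ℝ} {m r : ℕ}
    (hm : m * ((2 * m + 1) ^ D * 2 ^ (m - r) : ℝ) < (ε * m - r) * 2 ^ m) :
    ∃ s : Fin m → V, ∀ i, ε ≤ ∑ v ∈ B i, p v → ∃ j, s j ∈ B i := by
  by_contra! hbad
  choose i hεi hmiss using hbad
  -- `T` is the probability that a second sample hits at least `r` times a set the first misses
  set T := ∑ x with ∃ i, MissesThenHits (B i) r x, sampleWeight p x.1 * sampleWeight p x.2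
  have hlow : ε * m - r ≤ m * T := calc
    ε * m - r = ∑ s : Fin m → V, sampleWeight p s * (ε * m - r) := by
      rw [← sum_mul, sum_sampleWeight hp1, one_mul]
    _ ≤ ∑ s : Fin m → V, sampleWeight p s *
          (m * ∑ t : Fin m → V with r ≤ #{j | t j ∈ B (i s)}, sampleWeight p t) := by
      gcongr with s
      · exact sampleWeight_nonneg hp0 s
      · nlinarith [hεi s, mul_sum_sub_le_mul_sum_sampleWeight hp0 hp1 (B (i s)) r (m := m)]
    _ ≤ ∑ s : Fin m → V, sampleWeight p s *
          (m * ∑ t : Fin m → V with ∃ i, MissesThenHits (B i) r (s, t), sampleWeight p t) := by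
      gcongr with s
      · exact sampleWeight_nonneg hp0 s
      · exact fun t _ _ => sampleWeight_nonneg hp0 t
      · exact fun ht => ⟨i s, hmiss s, ht⟩
    _ = m * T := by
      simp only [T, sum_filter, mul_sum, Fintype.sum_prod_type]
      exact sum_congr rfl fun s _ => sum_congr rfl fun t _ => by split_ifs <;> ring
  have hup : 2 ^ m * T ≤ (2 * m + 1) ^ D * 2 ^ (m - r) := by
    refine (two_pow_mul_sum_le_of_card_swapAt_le hp0 hp1 _ ((2 * m + 1) ^ D * 2 ^ (m - r))
      fun x => (card_swapAt_exists_missesThenHits_le B r x).trans (Nat.mul_le_mul_right _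
        ((hB _).trans (Nat.pow_le_pow_left ?_ D)))).trans_eq (by push_cast; rfl)
    have := (card_union_le _ _).trans
      (add_le_add (card_image_le (s := univ) (f := x.1)) (card_image_le (s := univ) (f := x.2)))
    simp only [card_univ, Fintype.card_fin] at this
    omega
  nlinarith [(by positivity : (0 : ℝ) ≤ 2 ^ m)]

lemma exists_hitting_sample_of_four_mul_lt {V ι : Type*} [Fintype V] [DecidableEq V] [Fintype ι]
    {p : V → ℝ} (hp0 : ∀ v, 0 ≤ p v) (hp1 : ∑ v, p v = 1) (B : ι → Finset V) {D : ℕ}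
    (hB : ∀ S, numTraces B S ≤ (#S + 1) ^ D) {r : ℕ} (hr : 4 * (8 * r + 1) ^ D < 2 ^ r) :
    ∃ s : Fin (4 * r) → V, ∀ i, 1 / 2 ≤ ∑ v ∈ B i, p v → ∃ j, s j ∈ B i := by
  refine exists_hitting_sample hp0 hp1 B hB (r := r) ?_
  have hr0 : 0 < r := Nat.pos_of_ne_zero (by rintro rfl; norm_num at hr)
  have hr' : (4 * (8 * r + 1) ^ D : ℝ) < 2 ^ r := by exact_mod_cast hr
  have h2 : (2 : ℝ) ^ (4 * r) = 2 ^ r * 2 ^ (4 * r - r) := by rw [← pow_add]; congr 1; omega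
  have h8 : 2 * (4 * (r : ℝ)) + 1 = 8 * r + 1 := by ring
  rw [h2]
  push_cast
  rw [h8]
  nlinarith [mul_lt_mul_of_pos_right hr' (by positivity : (0 : ℝ) < r * 2 ^ (4 * r - r))]

section Majority

variable {V α : Type*} [LinearOrder α]

lemma card_filter_lt_add_card_filter_lt {n : ℕ} {f : Fin n → V → α}
    (hf : ∀ i, Function.Injective (f i)) {x y : V} (hxy : x ≠ y) :
    #{i | f i y < f i x} + #{i | f i x < f i y} = n := by
  have hne (i : Fin n) : f i x ≠ f i y := fun h => hxy (hf i h)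
  calc _ = #{i | f i y < f i x} + #{i | ¬f i y < f i x} := by
        simp only [not_lt, le_iff_lt_or_eq, hne, or_false]
    _ = n := by rw [card_filter_add_card_filter_not, card_univ, Fintype.card_fin]

lemma le_card_filter_le_iff {n : ℕ} {f : Fin n → V → α} (hf : ∀ i, Function.Injective (f i))
    {K : ℕ} (hK : K ≤ n) {x y : V} :
    K ≤ #{i | f i y ≤ f i x} ↔ x = y ∨ K ≤ #{i | f i y < f i x} := by
  by_cases hxy : x = y
  · simp [hxy, hK]
  · have hne (i : Fin n) : f i y ≠ f i x := fun h => hxy (hf i h).symm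
    simp only [hxy, false_or, le_iff_lt_or_eq, hne, or_false]

variable [Fintype V] [DecidableEq V]

lemma card_image_filter_le_apply_le (g : V → α) (S : Finset V) :
    #(univ.image fun y => {x ∈ S | g y ≤ g x}) ≤ #S + 1 := by
  -- these sets form a chain, so each of them is determined by its cardinality
  have hinj : Set.InjOn card (↑(univ.image fun y => {x ∈ S | g y ≤ g x}) : Set (Finset V)) := by
    simp only [coe_image, coe_univ, Set.image_univ]
    rintro _ ⟨y, rfl⟩ _ ⟨y', rfl⟩ h
    rcases le_total (g y) (g y') with hle | hle
    · exact (eq_of_subset_of_card_le (monotone_filter_right _ fun x _ hx => hle.trans hx)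
        h.le).symm
    · exact eq_of_subset_of_card_le (monotone_filter_right _ fun x _ hx => hle.trans hx) h.ge
  calc _ ≤ #(range (#S + 1)) := card_le_card_of_injOn card (fun c hc => by
          obtain ⟨y, -, rfl⟩ := mem_image.1 hc
          exact mem_range.2 (Nat.lt_succ_of_le (card_filter_le _ _))) hinj
    _ = #S + 1 := card_range _

lemma numTraces_majority_le {D : ℕ} (f : Fin D → V → α) (K : ℕ) (S : Finset V) :
    numTraces (fun y => ({x | K ≤ #{i | f i y ≤ f i x}} : Finset V)) S ≤ (#S + 1) ^ D := by
  set U : Fin D → V → Finset V := fun i y => {x ∈ S | f i y ≤ f i x}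
  set G : (Fin D → Finset V) → Finset V := fun u => {x ∈ S | K ≤ #{i | x ∈ u i}}
  have htrace (y : V) : S ∩ ({x | K ≤ #{i | f i y ≤ f i x}} : Finset V) = G fun i => U i y := by
    ext x
    by_cases hx : x ∈ S <;> simp [G, U, hx]
  calc numTraces _ S ≤ #((Fintype.piFinset fun i => univ.image (U i)).image G) := by
        refine card_le_card fun c hc => ?_
        obtain ⟨y, -, rfl⟩ := mem_image.1 hc
        exact mem_image.2 ⟨fun i => U i y, Fintype.mem_piFinset.2 fun i =>
          mem_image_of_mem _ (mem_univ y), (htrace y).symm⟩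
    _ ≤ ∏ i, #(univ.image (U i)) := card_image_le.trans (Fintype.card_piFinset _).le
    _ ≤ ∏ _i : Fin D, (#S + 1) := prod_le_prod' fun i _ => card_image_filter_le_apply_le (f i) S
    _ = (#S + 1) ^ D := by simp

end Majority

lemma four_mul_pow_lt_two_pow {K : ℕ} (hK : 1 ≤ K) :
    4 * (8 * (32 * K * (Nat.log 2 K + 1)) + 1) ^ (2 * K - 1) <
      2 ^ (32 * K * (Nat.log 2 K + 1)) := by
  set L := Nat.log 2 K + 1
  have hKL : K < 2 ^ L := Nat.lt_pow_succ_log_self (by norm_num) K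
  have hLL : L < 2 ^ L := Nat.lt_two_pow_self
  have hbase : 8 * (32 * K * L) + 1 ≤ 2 ^ (8 + 2 * L) := by
    have : K * L ≤ 2 ^ L * 2 ^ L := Nat.mul_le_mul hKL.le hLL.le
    have : 2 ^ (8 + 2 * L) = 256 * (2 ^ L * 2 ^ L) := by ring
    have : 1 ≤ K * L := Nat.one_le_iff_ne_zero.2 (by positivity)
    nlinarith
  calc 4 * (8 * (32 * K * L) + 1) ^ (2 * K - 1)
      ≤ 2 ^ 2 * (2 ^ (8 + 2 * L)) ^ (2 * K - 1) := by gcongr; norm_num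
    _ = 2 ^ (2 + (8 + 2 * L) * (2 * K - 1)) := by rw [← pow_mul, ← pow_add]
    _ < 2 ^ (32 * K * L) := by
        gcongr
        · norm_num
        · have : 1 ≤ L := Nat.le_add_left 1 _
          have : (8 + 2 * L) * (2 * K - 1) < (8 + 2 * L) * (2 * K) :=
            Nat.mul_lt_mul_of_pos_left (by omega) (by omega)
          nlinarith

lemma natLog_add_one_le_three_mul_log {K : ℕ} (hK : 2 ≤ K) :
    (Nat.log 2 K + 1 : ℝ) ≤ 3 * Real.log K := by
  have hlog2 : 0.6931471803 < Real.log 2 := Real.log_two_gt_d9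
  have hlogK : Real.log 2 ≤ Real.log K := Real.log_le_log (by norm_num) (by exact_mod_cast hK)
  have h : (Nat.log 2 K : ℝ) ≤ Real.log K / Real.log 2 := by
    simpa [Real.logb] using Real.natLog_le_logb K 2
  rw [le_div_iff₀ (by linarith)] at h
  nlinarith

/-- The linear order `≺ᵢ` is encoded as `v ≺ᵢ u ↔ f i v < f i u` with `f i` injective. -/
theorem K_majority_tournament_dominating_set :
    ∃ C : ℝ, 0 < C ∧
      ∀ (K : ℕ), 2 ≤ K → ∀ (V : Type) [Fintype V], ∀ (T : V → V → Prop)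
        (f : Fin (2 * K - 1) → V → ℕ), (∀ i, Function.Injective (f i)) →
        (∀ u v : V, T u v ↔
          K ≤ (Finset.univ.filter fun i => f i v < f i u).card) →
        ∃ X : Finset V, (X.card : ℝ) ≤ C * K * Real.log K ∧
          ∀ y ∉ X, ∃ x ∈ X, T x y := by
  refine ⟨384, by norm_num, fun K hK V _ T f hinj hT => ?_⟩
  classical
  rcases isEmpty_or_nonempty V with hV | hV
  · exact ⟨∅, by simp; positivity, fun y => isEmptyElim y⟩
  have hN (y : V) :
      ({x | K ≤ #{i | f i y ≤ f i x}} : Finset V) = ({x | x = y ∨ T x y} : Finset V) :=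
    filter_congr fun x _ => by rw [le_card_filter_le_iff hinj (by omega), hT]
  obtain ⟨p, hp, hhalf⟩ := exists_mem_stdSimplex_half_le_sum T fun x y hxy => by
    have := card_filter_lt_add_card_filter_lt hinj hxy
    rw [hT, hT]
    omega
  obtain ⟨s, hs⟩ := exists_hitting_sample_of_four_mul_lt hp.1 hp.2 _ (numTraces_majority_le f K)
    (four_mul_pow_lt_two_pow (K := K) (by omega))
  refine ⟨univ.image s, ?_, fun y hy => ?_⟩
  · calc (#(univ.image s) : ℝ) ≤ (4 * (32 * K * (Nat.log 2 K + 1)) : ℕ) := by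
          exact_mod_cast card_image_le.trans (by simp)
      _ ≤ 384 * K * Real.log K := by
          push_cast
          nlinarith [natLog_add_one_le_three_mul_log hK, (by positivity : (0 : ℝ) ≤ K)]
  · obtain ⟨j, hj⟩ := hs y (by rw [hN]; exact hhalf y)
    rw [hN, mem_filter] at hj
    have hsj : s j ∈ univ.image s := mem_image_of_mem s (mem_univ j)
    exact ⟨s j, hsj, hj.2.resolve_left fun h => hy (h ▸ hsj)⟩
end

section
/- Suppose Δ is a 3-coloring of the triples of [N] such that every tight monotone path of length n uses all three colors. If N > binom(n^3,3)+binom(n^3,2)+binom(n^3,1)+1, a contradiction follows; hence A_3(n;3,2) ≤ n^9. -/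
open Finset

def fpath (Δ : ℕ → ℕ → ℕ → Fin 3) (c : Fin 3) : ℕ → ℕ → ℕ
  | i, j =>
    (Finset.range i).attach.sup fun w =>
      if Δ w.1 i j ≠ c then fpath Δ c w.1 i + 1 else 0
termination_by i _ => i
decreasing_by exact Finset.mem_range.mp w.2

lemma fpath_eq (Δ : ℕ → ℕ → ℕ → Fin 3) (c : Fin 3) (i j : ℕ) :
    fpath Δ c i j =
      (Finset.range i).attach.sup
        (fun w => if Δ w.1 i j ≠ c then fpath Δ c w.1 i + 1 else 0) := by
  rw [fpath]

/-- Extension step: a `c`-avoiding path ending `(w,i)` extends by the edge `(w,i,j)`. -/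
lemma fpath_step (Δ : ℕ → ℕ → ℕ → Fin 3) (c : Fin 3) {w i : ℕ} (j : ℕ)
    (hw : w < i) (hΔ : Δ w i j ≠ c) :
    fpath Δ c w i + 1 ≤ fpath Δ c i j := by
  rw [fpath_eq Δ c i j]
  have hm : (⟨w, Finset.mem_range.mpr hw⟩ : {x // x ∈ Finset.range i}) ∈
      (Finset.range i).attach := Finset.mem_attach _ _
  have h := Finset.le_sup
    (f := fun w : {x // x ∈ Finset.range i} =>
      if Δ w.1 i j ≠ c then fpath Δ c w.1 i + 1 else 0) hm
  simpa [hΔ] using h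

lemma fpath_extract (Δ : ℕ → ℕ → ℕ → Fin 3) (c : Fin 3) {i j s : ℕ}
    (h : s + 1 ≤ fpath Δ c i j) :
    ∃ w < i, Δ w i j ≠ c ∧ s ≤ fpath Δ c w i := by
  rw [fpath_eq] at h
  by_contra hno
  push_neg at hno
  have hle : (Finset.range i).attach.sup
      (fun w => if Δ w.1 i j ≠ c then fpath Δ c w.1 i + 1 else 0) ≤ s := by
    apply Finset.sup_le
    intro w _
    by_cases hc : Δ w.1 i j ≠ c
    · rw [if_pos hc]
      have := hno w.1 (Finset.mem_range.mp w.2) hc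
      omega
    · simp [hc]
  omega

/-- From a large `fpath` value one can extract an actual monotone tight path
avoiding color `c`. -/
lemma fpath_path (Δ : ℕ → ℕ → ℕ → Fin 3) (c : Fin 3) :
    ∀ s i j, i < j → s ≤ fpath Δ c i j →
    ∃ v : ℕ → ℕ, (∀ r, v r < v (r + 1)) ∧ v s = i ∧ v (s + 1) = j ∧
      (∀ r ≤ s + 1, v r ≤ j) ∧ (∀ r < s, Δ (v r) (v (r + 1)) (v (r + 2)) ≠ c) := by
  intro s
  induction s with
  | zero =>
    intro i j hij _
    refine ⟨fun r => if r = 0 then i else j + r - 1, ?_, ?_, ?_, ?_, ?_⟩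
    · intro r
      by_cases h0 : r = 0
      · subst h0; simp; omega
      · have h1 : r + 1 ≠ 0 := by omega
        simp only [h0, h1, if_false]
        omega
    · simp
    · simp
    · intro r hr
      interval_cases r
      · simp; omega
      · simp
    · intro r hr; omega
  | succ s ih =>
    intro i j hij h
    obtain ⟨w, hw, hΔ, hf⟩ := fpath_extract Δ c h
    obtain ⟨v', h1, h2, h3, h4, h5⟩ := ih w i hw hf
    refine ⟨fun r => if r ≤ s + 1 then v' r else j + r - (s + 2), ?_, ?_, ?_, ?_, ?_⟩
    · intro r
      dsimp only
      by_cases ha : r + 1 ≤ s + 1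
      · have hb : r ≤ s + 1 := by omega
        rw [if_pos ha, if_pos hb]
        exact h1 r
      · by_cases hb : r ≤ s + 1
        · have hr : r = s + 1 := by omega
          rw [if_pos hb, if_neg ha, hr, h3]
          omega
        · rw [if_neg ha, if_neg hb]
          omega
    · dsimp only
      rw [if_pos (by omega : s + 1 ≤ s + 1), h3]
    · dsimp only
      rw [if_neg (by omega : ¬ (s + 1 + 1 ≤ s + 1))]
      omega
    · intro r hr
      dsimp only
      by_cases hb : r ≤ s + 1
      · rw [if_pos hb]
        have := h4 r hb
        omega
      · rw [if_neg hb]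
        omega
    · intro r hr
      dsimp only
      by_cases hs : r < s
      · have e0 : r ≤ s + 1 := by omega
        have e1 : r + 1 ≤ s + 1 := by omega
        have e2 : r + 2 ≤ s + 1 := by omega
        rw [if_pos e0, if_pos e1, if_pos e2]
        exact h5 r hs
      · have hr' : r = s := by omega
        have e0 : r ≤ s + 1 := by omega
        have e1 : r + 1 ≤ s + 1 := by omega
        have e2 : ¬ (r + 2 ≤ s + 1) := by omega
        rw [if_pos e0, if_pos e1, if_neg e2, hr', h2,
          show s + 1 = s + 1 from rfl]
        rw [show (s : ℕ) + 1 = s + 1 from rfl, h3,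
          show j + (s + 2) - (s + 2) = j from by omega]
        exact hΔ

lemma exists_third_color : ∀ a b : Fin 3, ∃ c : Fin 3, a ≠ c ∧ b ≠ c := by decide

lemma numer_bound (m : ℕ) (hm : 27 ≤ m) :
    Nat.choose m 3 + Nat.choose m 2 + Nat.choose m 1 + 1 < m ^ 3 := by
  obtain ⟨a, rfl⟩ : ∃ a, m = a + 27 := ⟨m - 27, by omega⟩
  have h6 : (a + 28).descFactorial 3 = 6 * (a + 28).choose 3 := by
    rw [Nat.descFactorial_eq_factorial_mul_choose]
    norm_num [Nat.factorial]
  have hdval : (a + 28).descFactorial 3 = (a + 26) * ((a + 27) * (a + 28)) := by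
    simp [Nat.descFactorial]
  have hP : (a + 28).choose 3 = (a + 27).choose 2 + (a + 27).choose 3 := by
    rw [show a + 28 = (a + 27) + 1 by omega]
    exact Nat.choose_succ_succ _ 2
  have hkey : (a + 26) * ((a + 27) * (a + 28)) + 6 * a + 174 ≤ 6 * (a + 27) ^ 3 := by
    nlinarith [sq_nonneg a, a * a * a ≥ 0]
  rw [Nat.choose_one_right]
  omega


/-- `A_3(n; 3, 2)`: the least `N` such that every 3-coloring of the triples of
`[N]` (identified with `{0, …, N-1}`) contains a tight monotone path with `n`
edges using at most 2 colors. -/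
noncomputable def Athree (n : ℕ) : ℕ :=
  sInf {N : ℕ | ∀ Δ : ℕ → ℕ → ℕ → Fin 3,
    ∃ v : ℕ → ℕ, (∀ i < n + 1, v i < v (i + 1)) ∧ (∀ i ≤ n + 1, v i < N) ∧
      ((Finset.range n).image fun i => Δ (v i) (v (i + 1)) (v (i + 2))).card ≤ 2}

/-- If `Δ` is a 3-coloring of the triples of `[N]` in which every tight
monotone path of length `n` uses all three colors, then
`N ≤ binom(n³,3) + binom(n³,2) + binom(n³,1) + 1`; equivalently, whenever
`N` exceeds this bound, some tight monotone path of length `n` uses at most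
two colors. Consequently `A_3(n; 3, 2) ≤ n⁹`. -/
theorem A3_le_n_pow_nine (n : ℕ) (hn : 3 ≤ n) :
    (∀ N : ℕ,
      Nat.choose (n ^ 3) 3 + Nat.choose (n ^ 3) 2 + Nat.choose (n ^ 3) 1 + 1 < N →
      ∀ Δ : ℕ → ℕ → ℕ → Fin 3,
        ∃ v : ℕ → ℕ, (∀ i < n + 1, v i < v (i + 1)) ∧ (∀ i ≤ n + 1, v i < N) ∧
          ((Finset.range n).image fun i => Δ (v i) (v (i + 1)) (v (i + 2))).card ≤ 2)
    ∧ Athree n ≤ n ^ 9 := by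
  have P1 : ∀ N : ℕ,
      Nat.choose (n ^ 3) 3 + Nat.choose (n ^ 3) 2 + Nat.choose (n ^ 3) 1 + 1 < N →
      ∀ Δ : ℕ → ℕ → ℕ → Fin 3,
        ∃ v : ℕ → ℕ, (∀ i < n + 1, v i < v (i + 1)) ∧ (∀ i ≤ n + 1, v i < N) ∧
          ((Finset.range n).image fun i => Δ (v i) (v (i + 1)) (v (i + 2))).card ≤ 2 := by
    intro N hN Δ
    by_contra hno
    push_neg at hno
    have hN' : n ^ 3 + 1 < N := by
      rw [Nat.choose_one_right] at hN
      omega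
    -- every fpath value is < n
    have hbound : ∀ (c : Fin 3) (i j : ℕ), i < j → j < N → fpath Δ c i j < n := by
      intro c i j hij hjN
      by_contra hge
      push_neg at hge
      obtain ⟨v, h1, h2, h3, h4, h5⟩ := fpath_path Δ c n i j hij hge
      have hcard := hno v (fun i _ => h1 i)
        (fun r hr => lt_of_le_of_lt (h4 r hr) hjN)
      have hsub : ((Finset.range n).image fun r => Δ (v r) (v (r + 1)) (v (r + 2))) ⊆
          (Finset.univ.erase c) := by
        intro a ha
        simp only [Finset.mem_image, Finset.mem_range] at ha
        obtain ⟨r, hr, rfl⟩ := ha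
        exact Finset.mem_erase.mpr ⟨h5 r hr, Finset.mem_univ _⟩
      have h2' : ((Finset.range n).image fun r => Δ (v r) (v (r + 1)) (v (r + 2))).card ≤ 2 := by
        have := Finset.card_le_card hsub
        have hc3 : (Finset.univ.erase c).card = 2 := by
          rw [Finset.card_erase_of_mem (Finset.mem_univ _)]
          simp
        omega
      omega
    -- pigeonhole on x ↦ triple of fpath values at (x, x+1)
    have maps : ∀ x ∈ Finset.range (N - 1),
        (fpath Δ 0 x (x + 1), fpath Δ 1 x (x + 1), fpath Δ 2 x (x + 1)) ∈
          Finset.range n ×ˢ Finset.range n ×ˢ Finset.range n := by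
      intro x hx
      have hxN : x + 1 < N := by
        have := Finset.mem_range.mp hx
        omega
      simp only [Finset.mem_product, Finset.mem_range]
      exact ⟨hbound 0 x (x + 1) (by omega) hxN,
             hbound 1 x (x + 1) (by omega) hxN,
             hbound 2 x (x + 1) (by omega) hxN⟩
    have hcard : (Finset.range n ×ˢ Finset.range n ×ˢ Finset.range n).card <
        (Finset.range (N - 1)).card := by
      simp only [Finset.card_product, Finset.card_range]
      have : n * (n * n) = n ^ 3 := by ring
      omega
    obtain ⟨x, hx, y, hy, hxy, heq⟩ :=
      Finset.exists_ne_map_eq_of_card_lt_of_maps_to hcard maps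
    -- symmetric key argument
    have key : ∀ x y : ℕ, x < y →
        ((fpath Δ 0 x (x + 1), fpath Δ 1 x (x + 1), fpath Δ 2 x (x + 1)) =
         (fpath Δ 0 y (y + 1), fpath Δ 1 y (y + 1), fpath Δ 2 y (y + 1))) → False := by
      intro x y hlt heq
      have hall : ∀ c : Fin 3, fpath Δ c x (x + 1) = fpath Δ c y (y + 1) := by
        have e0 := congrArg Prod.fst heq
        have e1 := congrArg (fun p => p.2.1) heq
        have e2 := congrArg (fun p => p.2.2) heq
        simp only at e0 e1 e2
        intro c
        fin_cases c
        · exact e0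
        · exact e1
        · exact e2
      rcases eq_or_lt_of_le (show x + 1 ≤ y by omega) with h1 | h1
      · -- y = x + 1
        obtain ⟨c, hc, _⟩ :=
          exists_third_color (Δ x (x + 1) (x + 1 + 1)) (Δ x (x + 1) (x + 1 + 1))
        have hstep := fpath_step Δ c (x + 1 + 1) (show x < x + 1 by omega) hc
        have hcc := hall c
        rw [← h1] at hcc
        omega
      · -- x + 1 < y
        obtain ⟨c, hc1, hc2⟩ := exists_third_color (Δ x (x + 1) y) (Δ (x + 1) y (y + 1))
        have s1 := fpath_step Δ c y (show x < x + 1 by omega) hc1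
        have s2 := fpath_step Δ c (y + 1) h1 hc2
        have hcc := hall c
        omega
    rcases lt_or_gt_of_ne hxy with h | h
    · exact key x y h heq
    · exact key y x h heq.symm
  refine ⟨P1, ?_⟩
  have hm : 27 ≤ n ^ 3 := by
    calc (27 : ℕ) = 3 ^ 3 := by norm_num
    _ ≤ n ^ 3 := Nat.pow_le_pow_left hn 3
  have hineq : Nat.choose (n ^ 3) 3 + Nat.choose (n ^ 3) 2 + Nat.choose (n ^ 3) 1 + 1 < n ^ 9 := by
    have h9 : n ^ 9 = (n ^ 3) ^ 3 := by rw [← pow_mul]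
    rw [h9]
    exact numer_bound (n ^ 3) hm
  apply Nat.sInf_le
  intro Δ
  exact P1 (n ^ 9) hineq Δ
end

section
/- There is an absolute constant C > 0 such that for all n ≥ 3 and r > s > r/2, every r-coloring of the triples of [N] with N > n^{C·binom(r,s)^2·log binom(r,s)} contains a tight monotone path with n edges which uses at most s colors. -/
/-- A tight monotone path with `m` edges, ending with the pair `(x, y)`,
with all vertices `< N` and all edge colors in `{c, d}`. -/
def TPath (r N : ℕ) (Δ : ℕ → ℕ → ℕ → Fin r) (c d : Fin r) (m x y : ℕ) : Prop :=
  ∃ v : ℕ → ℕ, (∀ i ≤ m, v i < v (i + 1)) ∧ (∀ i ≤ m + 1, v i < N) ∧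
    v m = x ∧ v (m + 1) = y ∧
    ∀ i < m, Δ (v i) (v (i + 1)) (v (i + 2)) = c ∨ Δ (v i) (v (i + 1)) (v (i + 2)) = d

lemma tpath_zero {r N : ℕ} {Δ : ℕ → ℕ → ℕ → Fin r} {c d : Fin r} {x y : ℕ}
    (hxy : x < y) (hy : y < N) : TPath r N Δ c d 0 x y := by
  refine ⟨fun i => if i = 0 then x else y, ?_, ?_, by simp, by simp, by simp⟩
  · intro i hi
    interval_cases i
    simpa using hxy
  · intro i hi
    interval_cases i <;> simp [hy, lt_trans hxy hy]

lemma tpath_extend {r N : ℕ} {Δ : ℕ → ℕ → ℕ → Fin r} {c d : Fin r} {m x y z : ℕ}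
    (h : TPath r N Δ c d m x y) (hyz : y < z) (hz : z < N)
    (hΔ : Δ x y z = c ∨ Δ x y z = d) : TPath r N Δ c d (m + 1) y z := by
  obtain ⟨v, h1, h2, h3, h4, h5⟩ := h
  refine ⟨fun i => if i ≤ m + 1 then v i else z, ?_, ?_, ?_, ?_, ?_⟩
  · intro i hi
    dsimp only
    rcases Nat.lt_or_ge i (m + 1) with hlt | hge
    · rw [if_pos (by omega : i ≤ m + 1), if_pos (by omega : i + 1 ≤ m + 1)]
      exact h1 i (by omega)
    · have hi' : i = m + 1 := by omega
      subst hi'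
      rw [if_pos (by omega : m + 1 ≤ m + 1), if_neg (by omega : ¬ (m + 1 + 1 ≤ m + 1)), h4]
      exact hyz
  · intro i hi
    dsimp only
    by_cases hc : i ≤ m + 1
    · rw [if_pos hc]; exact h2 i hc
    · rw [if_neg hc]; exact hz
  · dsimp only
    rw [if_pos (by omega : m + 1 ≤ m + 1)]; exact h4
  · dsimp only
    rw [if_neg (by omega : ¬ (m + 1 + 1 ≤ m + 1))]
  · intro i hi
    dsimp only
    rcases Nat.lt_or_ge i m with hlt | hge
    · rw [if_pos (by omega : i ≤ m + 1), if_pos (by omega : i + 1 ≤ m + 1),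
        if_pos (by omega : i + 2 ≤ m + 1)]
      exact h5 i hlt
    · have hi' : i = m := by omega
      rw [if_pos (by omega : i ≤ m + 1), if_pos (by omega : i + 1 ≤ m + 1),
        if_neg (by omega : ¬ (i + 2 ≤ m + 1)), hi', h3, h4]
      exact hΔ

lemma tpath_trunc {r N : ℕ} {Δ : ℕ → ℕ → ℕ → Fin r} {c d : Fin r} {m n x y : ℕ}
    (h : TPath r N Δ c d m x y) (hnm : n ≤ m) :
    ∃ x' y', TPath r N Δ c d n x' y' := by
  obtain ⟨v, h1, h2, h3, h4, h5⟩ := h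
  exact ⟨v n, v (n + 1), v, fun i hi => h1 i (by omega), fun i hi => h2 i (by omega),
    rfl, rfl, fun i hi => h5 i (by omega)⟩

/-- Longest such path. -/
noncomputable def Lfun (r N : ℕ) (Δ : ℕ → ℕ → ℕ → Fin r) (x y : ℕ) (c d : Fin r) : ℕ :=
  sSup {m | TPath r N Δ c d m x y}

lemma le_choose_aux : ∀ r s : ℕ, 0 < s → s < r → r ≤ r.choose s := by
  intro r
  induction r with
  | zero => intro s h1 h2; omega
  | succ k ih =>
    intro s h1 h2
    cases s with
    | zero => omega
    | succ s' =>
      rw [Nat.choose_succ_succ]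
      rcases Nat.lt_or_ge (s' + 1) k with hlt | hge
      · have hk : k ≤ k.choose (s' + 1) := ih (s' + 1) (by omega) hlt
        have hpos : 0 < k.choose s' := Nat.choose_pos (by omega)
        show k + 1 ≤ k.choose s' + k.choose (s' + 1)
        omega
      · have hk : s' + 1 = k := by omega
        subst hk
        rw [Nat.choose_self, Nat.choose_succ_self_right]

/-- **Theorem (uniformity three).** There is an absolute constant `C > 0` such
that for all `n ≥ 3` and `r > s > r/2`, every `r`-coloring of the triples of
`[N]` (identified with `{0, …, N-1}`) with
`N > n^(C · binom(r,s)² · log binom(r,s))` contains a tight monotone path with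
`n` edges which uses at most `s` colors. -/
theorem color_avoiding_paths_uniformity_three :
    ∃ C : ℝ, 0 < C ∧
      ∀ n r s N : ℕ, 3 ≤ n → s < r → r < 2 * s →
        (N : ℝ) > (n : ℝ) ^
          (C * (Nat.choose r s : ℝ) ^ 2 * Real.log (Nat.choose r s)) →
        ∀ Δ : ℕ → ℕ → ℕ → Fin r,
          ∃ v : ℕ → ℕ, (∀ i < n + 1, v i < v (i + 1)) ∧ (∀ i ≤ n + 1, v i < N) ∧
            ((Finset.range n).image fun i => Δ (v i) (v (i + 1)) (v (i + 2))).card ≤ s := by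
  classical
  refine ⟨3, by norm_num, ?_⟩
  intro n r s N hn hsr hrs hN Δ
  by_contra hcon
  have hs2 : 2 ≤ s := by omega
  have hr3 : 3 ≤ r := by omega
  have hn0 : 0 < n := by omega
  -- no path of length `m ≥ n`
  have hnopath : ∀ (c d : Fin r) (m x y : ℕ), TPath r N Δ c d m x y → m < n := by
    intro c d m x y hp
    by_contra hge
    push_neg at hge
    obtain ⟨x', y', v, h1, h2, _, _, h5⟩ := tpath_trunc hp hge
    refine hcon ⟨v, fun i hi => h1 i (by omega), h2, ?_⟩
    have hsub : ((Finset.range n).image fun i => Δ (v i) (v (i + 1)) (v (i + 2)))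
        ⊆ ({c, d} : Finset (Fin r)) := by
      intro a ha
      simp only [Finset.mem_image, Finset.mem_range] at ha
      obtain ⟨i, hi, rfl⟩ := ha
      rcases h5 i hi with h | h <;> simp [h]
    have hc1 := Finset.card_le_card hsub
    have hc2 : ({c, d} : Finset (Fin r)).card ≤ 2 :=
      (Finset.card_insert_le _ _).trans (by simp)
    omega
  have hbdd : ∀ (x y : ℕ) (c d : Fin r), BddAbove {m | TPath r N Δ c d m x y} :=
    fun x y c d => ⟨n, fun m hm => (hnopath c d m x y hm).le⟩
  have hLmem : ∀ (x y : ℕ) (c d : Fin r), x < y → y < N →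
      TPath r N Δ c d (Lfun r N Δ x y c d) x y := by
    intro x y c d hxy hy
    exact Nat.sSup_mem (s := {m | TPath r N Δ c d m x y}) ⟨0, tpath_zero hxy hy⟩ (hbdd x y c d)
  have hLle : ∀ (x y : ℕ) (c d : Fin r) (m : ℕ), TPath r N Δ c d m x y →
      m ≤ Lfun r N Δ x y c d := fun x y c d m hm => le_csSup (hbdd x y c d) hm
  have hLlt : ∀ (x y : ℕ) (c d : Fin r), x < y → y < N → Lfun r N Δ x y c d < n :=
    fun x y c d h1 h2 => hnopath c d _ x y (hLmem x y c d h1 h2)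
  -- key step : jumping from the pair (2i, 2i+1) to the pair (2j, 2j+1)
  have hkey : ∀ i j : ℕ, i < j → 2 * j + 1 < N →
      Lfun r N Δ (2 * i) (2 * i + 1) (Δ (2 * i) (2 * i + 1) (2 * j))
          (Δ (2 * i + 1) (2 * j) (2 * j + 1)) + 2
        ≤ Lfun r N Δ (2 * j) (2 * j + 1) (Δ (2 * i) (2 * i + 1) (2 * j))
          (Δ (2 * i + 1) (2 * j) (2 * j + 1)) := by
    intro i j hij hjN
    have h0 : TPath r N Δ (Δ (2 * i) (2 * i + 1) (2 * j)) (Δ (2 * i + 1) (2 * j) (2 * j + 1))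
        (Lfun r N Δ (2 * i) (2 * i + 1) (Δ (2 * i) (2 * i + 1) (2 * j))
          (Δ (2 * i + 1) (2 * j) (2 * j + 1))) (2 * i) (2 * i + 1) :=
      hLmem _ _ _ _ (by omega) (by omega)
    have h1 := tpath_extend h0 (by omega : 2 * i + 1 < 2 * j) (by omega) (Or.inl rfl)
    have h2 := tpath_extend h1 (by omega : 2 * j < 2 * j + 1) (by omega) (Or.inr rfl)
    exact hLle _ _ _ _ _ h2
  -- the counting map
  set g : ℕ → (Fin r × Fin r → Fin n) := fun i cd =>
    ⟨Lfun r N Δ (2 * i) (2 * i + 1) cd.1 cd.2 % n, Nat.mod_lt _ hn0⟩ with hgdef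
  have hmain : ∀ a b : ℕ, a < N / 2 → b < N / 2 → a < b → g a ≠ g b := by
    intro a b ha hb hab hEq
    have hbN : 2 * b + 1 < N := by omega
    have haN : 2 * a + 1 < N := by omega
    have h2 := hkey a b hab hbN
    have hLa : Lfun r N Δ (2 * a) (2 * a + 1) (Δ (2 * a) (2 * a + 1) (2 * b))
        (Δ (2 * a + 1) (2 * b) (2 * b + 1)) < n := hLlt _ _ _ _ (by omega) haN
    have hLb : Lfun r N Δ (2 * b) (2 * b + 1) (Δ (2 * a) (2 * a + 1) (2 * b))
        (Δ (2 * a + 1) (2 * b) (2 * b + 1)) < n := hLlt _ _ _ _ (by omega) hbN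
    have hval := congrArg Fin.val
      (congrFun hEq (Δ (2 * a) (2 * a + 1) (2 * b), Δ (2 * a + 1) (2 * b) (2 * b + 1)))
    simp only [hgdef] at hval
    rw [Nat.mod_eq_of_lt hLa, Nat.mod_eq_of_lt hLb] at hval
    omega
  have hinj : Set.InjOn g (Finset.range (N / 2)) := by
    intro a ha b hb hEq
    simp only [Finset.coe_range, Set.mem_Iio] at ha hb
    by_contra hne
    rcases Nat.lt_or_ge a b with h | h
    · exact hmain a b ha hb h hEq
    · exact hmain b a hb ha (by omega) hEq.symm
  have hcard : N / 2 ≤ n ^ (r * r) := by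
    have h1 := Finset.card_le_card_of_injOn g
      (fun a _ => Finset.mem_univ (g a)) hinj
    rw [Finset.card_range, Finset.card_univ] at h1
    have h2 : Fintype.card (Fin r × Fin r → Fin n) = n ^ (r * r) := by
      rw [Fintype.card_fun]
      simp
    omega
  have hNle : N ≤ 2 * n ^ (r * r) + 1 := by omega
  -- arithmetic contradiction
  have hbr : (r : ℝ) ≤ (Nat.choose r s : ℝ) := by
    exact_mod_cast le_choose_aux r s (by omega) hsr
  have hr3' : (3 : ℝ) ≤ (r : ℝ) := by exact_mod_cast hr3
  have hb3 : (3 : ℝ) ≤ (Nat.choose r s : ℝ) := le_trans hr3' hbr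
  have hlog : 1 ≤ Real.log (Nat.choose r s) := by
    rw [Real.le_log_iff_exp_le (by linarith)]
    calc Real.exp 1 ≤ 2.7182818286 := Real.exp_one_lt_d9.le
      _ ≤ 3 := by norm_num
      _ ≤ (Nat.choose r s : ℝ) := hb3
  have hn3 : (3 : ℝ) ≤ (n : ℝ) := by exact_mod_cast hn
  have hx3 : (3 : ℝ) ≤ (n : ℝ) ^ (r * r) :=
    le_trans hn3 (le_self_pow₀ (by linarith) (by positivity))
  have hexp : ((2 * (r * r) : ℕ) : ℝ) ≤
      3 * (Nat.choose r s : ℝ) ^ 2 * Real.log (Nat.choose r s) := by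
    push_cast
    nlinarith [hbr, hlog, hb3, hr3']
  have hmono : (n : ℝ) ^ (((2 * (r * r) : ℕ)) : ℝ) ≤
      (n : ℝ) ^ (3 * (Nat.choose r s : ℝ) ^ 2 * Real.log (Nat.choose r s)) :=
    Real.rpow_le_rpow_of_exponent_le (by linarith) hexp
  rw [Real.rpow_natCast] at hmono
  have hsq : (n : ℝ) ^ (2 * (r * r)) = ((n : ℝ) ^ (r * r)) ^ 2 := by
    rw [two_mul, pow_add, sq]
  have hNr : (N : ℝ) ≤ 2 * (n : ℝ) ^ (r * r) + 1 := by exact_mod_cast hNle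
  rw [hsq] at hmono
  nlinarith [hN, hmono, hx3, hNr]
end

section
/- There is an absolute constant C > 0 such that for all n ≥ k ≥ 3 and r > s > r/2, one has A_k(n;r,s) ≤ T_{k−3}(n^{C·binom(r,s)^2·log binom(r,s)}), where T_j denotes the tower function of height j. -/
/-- `A_k(n; r, s)`: the least `N` such that every `r`-coloring of the
`k`-element subsets of `[N]` (identified with `{0, …, N-1}`) contains a tight
monotone path with `n` edges (vertices `w 0 < ⋯ < w (n+k-2)`, edges the sets
of `k` consecutive vertices) using at most `s` colors. -/
noncomputable def colorAvoidA (k n r s : ℕ) : ℕ :=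
  sInf {N : ℕ | ∀ Δ : Finset ℕ → Fin r,
    ∃ w : ℕ → ℕ, (∀ i < n + k - 2, w i < w (i + 1)) ∧ (∀ i ≤ n + k - 2, w i < N) ∧
      ((Finset.range n).image fun i => Δ ((Finset.Icc i (i + k - 1)).image w)).card ≤ s}

/-- The tower function with real argument: `T 0 x = x`, `T (j+1) x = 2 ^ (T j x)`. -/
noncomputable def towerR : ℕ → ℝ → ℝ
  | 0, x => x
  | j + 1, x => (2 : ℝ) ^ towerR j x

/-!
For `k = 3` the bound is polynomial. Suppose no good path exists in `[N]`. For each pair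
`(2j, 2j+1)` and each `s`-set of colours `σ`, record the length (`< n`) of the longest tight path
ending in that pair with all colours in `σ`. Any two colours lie in a common `s`-set, so for
`j < j'` some record strictly increases from pair `j` to pair `j'`; hence `n ^ C(r,s) + 1` pairs
cannot fit in `[N]`.

Going from `k` to `k + 1` is the Erdős–Rado stepping-up argument: greedily choose vertices
`u 0 < u 1 < ⋯ < u M` such that the colour of `{u i | i ∈ I} ∪ {u j}` does not depend on
`j > max I`. A good tight path for the `k`-uniform colouring `I ↦ Δ (u '' I ∪ {u M})` then lifts to
a good `(k+1)`-uniform one. Each step costs one exponential; from height `2` on the polynomial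
loss per step is absorbed by an additive shift of the tower's argument, which therefore stays
polynomial in `n`, with exponent `O(C(r,s))`.
-/

open Finset

namespace ColorAvoidingPaths

def tower : ℕ → ℕ → ℕ
  | 0, m => m
  | j + 1, m => 2 ^ tower j m

lemma tower_mono (j : ℕ) : Monotone (tower j) := by
  induction j with
  | zero => exact fun _ _ h => h
  | succ j ih => exact fun _ _ h => Nat.pow_le_pow_right two_pos (ih h)

lemma two_pow_add_le (x c : ℕ) : 2 ^ x + c ≤ 2 ^ (x + c) :=
  calc 2 ^ x + c ≤ 2 ^ x * (c + 1) := by nlinarith [Nat.one_le_two_pow (n := x)]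
    _ ≤ 2 ^ x * 2 ^ c := Nat.mul_le_mul_left _ Nat.lt_two_pow_self
    _ = 2 ^ (x + c) := (pow_add 2 x c).symm

lemma tower_add_le (j a c : ℕ) : tower j a + c ≤ tower j (a + c) := by
  induction j with
  | zero => rfl
  | succ j ih =>
    exact (two_pow_add_le _ c).trans (Nat.pow_le_pow_right two_pos ih)

lemma le_tower (j m : ℕ) : m ≤ tower j m := by
  simpa using (Nat.le_add_left m (tower j 0)).trans (tower_add_le j 0 m)

lemma mul_tower_succ_le (i c z : ℕ) : c * tower (i + 1) z ≤ tower (i + 1) (z + c) :=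
  calc c * 2 ^ tower i z ≤ 2 ^ c * 2 ^ tower i z :=
        Nat.mul_le_mul_right _ Nat.lt_two_pow_self.le
    _ = 2 ^ (tower i z + c) := by rw [← pow_add, add_comm]
    _ ≤ 2 ^ tower i (z + c) := Nat.pow_le_pow_right two_pos (tower_add_le i z c)

lemma natCast_tower_le_towerR (j : ℕ) {m : ℕ} {x : ℝ} (h : (m : ℝ) ≤ x) :
    (tower j m : ℝ) ≤ towerR j x := by
  induction j with
  | zero => exact h
  | succ j ih =>
    rw [tower, towerR, Nat.cast_pow, Nat.cast_ofNat, ← Real.rpow_natCast]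
    exact Real.rpow_le_rpow_of_exponent_le one_le_two ih

section Paths

variable {r : ℕ}

def IsGoodPath (Δ : Finset ℕ → Fin r) (s k n N : ℕ) (w : ℕ → ℕ) : Prop :=
  (∀ i < n + k - 2, w i < w (i + 1)) ∧ (∀ i ≤ n + k - 2, w i < N) ∧
    ((range n).image fun i => Δ ((Icc i (i + k - 1)).image w)).card ≤ s

def ForcesGoodPath (r s k n N : ℕ) : Prop :=
  ∀ Δ : Finset ℕ → Fin r, ∃ w, IsGoodPath Δ s k n N w

lemma ForcesGoodPath.mono {s k n N N' : ℕ} (h : ForcesGoodPath r s k n N) (hN : N ≤ N') :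
    ForcesGoodPath r s k n N' := fun Δ =>
  let ⟨w, hmono, hlt, hcol⟩ := h Δ
  ⟨w, hmono, fun i hi => (hlt i hi).trans_le hN, hcol⟩

lemma colorAvoidA_le {s k n N : ℕ} (h : ForcesGoodPath r s k n N) : colorAvoidA k n r s ≤ N :=
  Nat.sInf_le h

end Paths

lemma exists_card_eq_of_pair_subset {r s : ℕ} (hs : 2 ≤ s) (hsr : s ≤ r) (x y : Fin r) :
    ∃ σ : Finset (Fin r), {x, y} ⊆ σ ∧ σ.card = s := by
  obtain ⟨σ, hxy, -, hσ⟩ := exists_subsuperset_card_eq (subset_univ {x, y})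
    (card_le_two.trans hs) (by simpa using hsr)
  exact ⟨σ, hxy, hσ⟩

section BaseCase

variable {r : ℕ} (Δ : Finset ℕ → Fin r) (σ : Finset (Fin r))

def PathEndingAt (a b t : ℕ) : Prop :=
  ∃ w : ℕ → ℕ, (∀ i ≤ t, w i < w (i + 1)) ∧ w t = a ∧ w (t + 1) = b ∧
    ∀ i < t, Δ ((Icc i (i + 2)).image w) ∈ σ

variable {Δ σ}

lemma pathEndingAt_zero {a b : ℕ} (hab : a < b) : PathEndingAt Δ σ a b 0 :=
  ⟨fun i => a + i * (b - a), fun i hi => by obtain rfl := Nat.le_zero.1 hi; simpa using hab,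
    by simp, by simp; omega, fun i hi => absurd hi i.not_lt_zero⟩

lemma PathEndingAt.snoc {a b c t : ℕ} (h : PathEndingAt Δ σ a b t) (hbc : b < c)
    (habc : Δ {a, b, c} ∈ σ) : PathEndingAt Δ σ b c (t + 1) := by
  obtain ⟨w, hmono, rfl, rfl, hcol⟩ := h
  refine ⟨fun i => if i ≤ t + 1 then w i else c, fun i hi => ?_, by simp, by simp, fun i hi => ?_⟩
  · rcases hi.lt_or_eq with hi | rfl
    · simpa [show i ≤ t + 1 by omega, show i + 1 ≤ t + 1 by omega] using hmono i (by omega)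
    · simpa using hbc
  · rcases (Nat.lt_succ_iff.mp hi).lt_or_eq with hi | rfl
    · convert hcol i hi using 2
      exact image_congr fun x hx => by
        simp only [coe_Icc, Set.mem_Icc] at hx
        simp [show x ≤ t + 1 by omega]
    · convert habc using 2
      ext y
      simp only [mem_image, mem_Icc, mem_insert, mem_singleton]
      constructor
      · rintro ⟨x, hx, rfl⟩
        rcases (by omega : x = i ∨ x = i + 1 ∨ x = i + 2) with rfl | rfl | rfl <;> simp
      · rintro (rfl | rfl | rfl)
        exacts [⟨i, by simp⟩, ⟨i + 1, by simp⟩, ⟨i + 2, by simp⟩]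

lemma PathEndingAt.exists_isGoodPath {a b t s n N : ℕ} (h : PathEndingAt Δ σ a b t)
    (hnt : n ≤ t) (hbN : b < N) (hσ : σ.card ≤ s) : ∃ w, IsGoodPath Δ s 3 n N w := by
  obtain ⟨w, hmono, -, rfl, hcol⟩ := h
  have hstrict : StrictMonoOn w (Set.Iic (t + 1)) :=
    strictMonoOn_Iic_of_lt_succ fun m hm => hmono m (Nat.lt_succ_iff.mp hm)
  refine ⟨fun i => w (i + (t - n)), fun i hi => ?_, fun i hi => ?_, ?_⟩
  · simpa [Nat.add_right_comm] using hmono (i + (t - n)) (by omega)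
  · exact (hstrict.monotoneOn (Set.mem_Iic.2 (by omega)) Set.self_mem_Iic (by omega)).trans_lt hbN
  · refine (card_le_card fun z hz => ?_).trans hσ
    simp only [mem_image, mem_range] at hz
    obtain ⟨i, hi, rfl⟩ := hz
    convert hcol (i + (t - n)) (by omega) using 2
    ext y
    simp only [mem_image, mem_Icc]
    exact ⟨fun ⟨x, hx, hy⟩ => ⟨x + (t - n), by omega, hy⟩,
      fun ⟨x, hx, hy⟩ => ⟨x - (t - n), by omega, by rw [← hy]; congr 1; omega⟩⟩

variable (Δ σ) in
noncomputable def longestPath (a b : ℕ) : ℕ := sSup {t | PathEndingAt Δ σ a b t}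

lemma PathEndingAt.lt {a b t s n N : ℕ} (hbad : ∀ w, ¬ IsGoodPath Δ s 3 n N w)
    (hσ : σ.card ≤ s) (hbN : b < N) (h : PathEndingAt Δ σ a b t) : t < n := by
  by_contra! hnt
  obtain ⟨w, hw⟩ := h.exists_isGoodPath hnt hbN hσ
  exact hbad w hw

lemma pathEndingAt_longestPath {a b s n N : ℕ} (hbad : ∀ w, ¬ IsGoodPath Δ s 3 n N w)
    (hσ : σ.card ≤ s) (hab : a < b) (hbN : b < N) :
    PathEndingAt Δ σ a b (longestPath Δ σ a b) ∧ longestPath Δ σ a b < n := by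
  have hmem : PathEndingAt Δ σ a b (longestPath Δ σ a b) := Nat.sSup_mem ⟨0, pathEndingAt_zero hab⟩
    ⟨n, fun t ht => (PathEndingAt.lt hbad hσ hbN ht).le⟩
  exact ⟨hmem, hmem.lt hbad hσ hbN⟩

lemma longestPath_lt_longestPath {a b c s n N : ℕ} (hbad : ∀ w, ¬ IsGoodPath Δ s 3 n N w)
    (hσ : σ.card ≤ s) (hab : a < b) (hbc : b < c) (hcN : c < N) (habc : Δ {a, b, c} ∈ σ) :
    longestPath Δ σ a b < longestPath Δ σ b c :=
  le_csSup ⟨n, fun _ ht => (PathEndingAt.lt hbad hσ hcN ht).le⟩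
    ((pathEndingAt_longestPath hbad hσ hab (hbc.trans hcN)).1.snoc hbc habc)

end BaseCase

theorem forcesGoodPath_three {r s : ℕ} (hs : 2 ≤ s) (hsr : s ≤ r) (n : ℕ) :
    ForcesGoodPath r s 3 n (2 * n ^ r.choose s + 4) := by
  classical
  intro Δ
  by_contra! hbad
  let S := (powersetCard s (univ : Finset (Fin r)))
  have hσ (σ : S) : (σ : Finset (Fin r)).card ≤ s := (mem_powersetCard.1 σ.2).2.le
  let record (j : ℕ) (σ : S) : ℕ := longestPath Δ σ (2 * j) (2 * j + 1)
  have hmaps : Set.MapsTo record (range (n ^ r.choose s + 1))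
      (Fintype.piFinset fun _ : S => range n) := fun j hj => by
    simp only [coe_range, Set.mem_Iio] at hj
    simp only [mem_coe, Fintype.mem_piFinset, mem_range]
    exact fun σ => (pathEndingAt_longestPath hbad (hσ σ) (by omega : 2 * j < 2 * j + 1)
      (by omega)).2
  have hinj : Set.InjOn record (range (n ^ r.choose s + 1)) := by
    suffices ∀ j j', j < j' → j' ≤ n ^ r.choose s → record j ≠ record j' by
      intro j hj j' hj' heq
      simp only [coe_range, Set.mem_Iio] at hj hj'
      by_contra hne
      rcases lt_or_gt_of_ne hne with h | h
      exacts [this j j' h (by omega) heq, this j' j h (by omega) heq.symm]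
    intro j j' hjj' hj' heq
    obtain ⟨σ, hxy, hσs⟩ := exists_card_eq_of_pair_subset hs hsr
      (Δ {2 * j, 2 * j + 1, 2 * j'}) (Δ {2 * j + 1, 2 * j', 2 * j' + 1})
    have hσ' : σ ∈ powersetCard s univ := mem_powersetCard.2 ⟨subset_univ σ, hσs⟩
    have h₁ := longestPath_lt_longestPath hbad hσs.le (by omega : 2 * j < 2 * j + 1)
      (by omega : 2 * j + 1 < 2 * j') (by omega) (hxy (by simp))
    have h₂ := longestPath_lt_longestPath hbad hσs.le (by omega : 2 * j + 1 < 2 * j')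
      (by omega : 2 * j' < 2 * j' + 1) (by omega) (hxy (by simp))
    have := congrFun heq ⟨σ, hσ'⟩
    simp only [record] at this
    omega
  have hcard := card_le_card_of_injOn record hmaps hinj
  simp [S, card_powersetCard] at hcard

lemma exists_card_le_mul_card_fiber {α β : Type*} [Nonempty α] [Fintype β] [DecidableEq β]
    (f : α → β) (S : Finset α) : ∃ y, S.card ≤ Fintype.card β * (S.filter (f · = y)).card := by
  have : Nonempty β := ⟨f (Classical.arbitrary α)⟩
  obtain ⟨y, -, hy⟩ := exists_max_image univ (fun y => (S.filter (f · = y)).card) univ_nonempty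
  refine ⟨y, (card_le_mul_card_image S _ fun b _ => hy b (mem_univ b)).trans ?_⟩
  rw [mul_comm]
  exact Nat.mul_le_mul_right _ (card_le_univ _)

section EndHomogeneous

variable {r : ℕ} (Δ : Finset ℕ → Fin r) (k M : ℕ)

abbrev Fingerprint (r k M : ℕ) : Type := ↥(powersetCard k (range (M + 1))) → Fin r

lemma card_fingerprint : Fintype.card (Fingerprint r k M) = r ^ (M + 1).choose k := by
  simp [Fingerprint, card_powersetCard]

def fingerprint (v : ℕ → ℕ) (c : ℕ) : Fingerprint r k M :=
  fun A => Δ (insert c ((A : Finset ℕ).image v))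

/-- One step of the greedy Erdős–Rado construction on a pair (candidates, chosen vertices): the
least candidate becomes the `t`-th chosen vertex, and the other candidates are cut down to a class
of equal fingerprints of at least average size. -/
noncomputable def greedyStep (t : ℕ) (p : Finset ℕ × (ℕ → ℕ)) : Finset ℕ × (ℕ → ℕ) :=
  let v := Function.update p.2 t (sInf (p.1 : Set ℕ))
  let S := p.1.erase (sInf (p.1 : Set ℕ))
  (S.filter (fingerprint Δ k M v · =
    (exists_card_le_mul_card_fiber (fingerprint Δ k M v) S).choose), v)

noncomputable def greedy : ℕ → Finset ℕ × (ℕ → ℕ)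
  | 0 => (range ((r ^ (M + 1).choose k + 1) ^ (M + 2)), fun _ => 0)
  | t + 1 => greedyStep Δ k M t (greedy t)

noncomputable def chosen (t : ℕ) : ℕ := sInf ((greedy Δ k M t).1 : Set ℕ)

lemma greedy_succ_fst_subset (t : ℕ) :
    (greedy Δ k M (t + 1)).1 ⊆ (greedy Δ k M t).1.erase (chosen Δ k M t) :=
  filter_subset _ _

lemma greedy_fst_antitone : Antitone fun t => (greedy Δ k M t).1 :=
  antitone_nat_of_succ_le fun t => (greedy_succ_fst_subset Δ k M t).trans (erase_subset _ _)

lemma greedy_snd_of_lt {i t : ℕ} (hit : i < t) : (greedy Δ k M t).2 i = chosen Δ k M i := by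
  induction t with
  | zero => omega
  | succ t ih =>
    rcases (Nat.lt_succ_iff.mp hit).lt_or_eq with h | rfl
    · exact (Function.update_of_ne h.ne _ _).trans (ih h)
    · exact Function.update_self _ _ _

lemma chosen_mem_of_nonempty {t : ℕ} (h : (greedy Δ k M t).1.Nonempty) :
    chosen Δ k M t ∈ (greedy Δ k M t).1 := by
  exact_mod_cast Nat.sInf_mem (coe_nonempty.2 h)

lemma card_greedy_fst_le_mul (t : ℕ) :
    ((greedy Δ k M t).1.erase (chosen Δ k M t)).card ≤
      r ^ (M + 1).choose k * (greedy Δ k M (t + 1)).1.card := by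
  rw [← card_fingerprint]
  exact Exists.choose_spec (exists_card_le_mul_card_fiber _ _)

lemma pow_le_card_greedy_fst {t : ℕ} (ht : t ≤ M + 2) :
    (r ^ (M + 1).choose k + 1) ^ (M + 2 - t) ≤ (greedy Δ k M t).1.card := by
  induction t with
  | zero => simp [greedy]
  | succ t ih =>
    have hprev := ih (by omega)
    have hmem := chosen_mem_of_nonempty Δ k M
      (card_pos.1 ((Nat.pow_pos (Nat.succ_pos _)).trans_le hprev))
    have hstep := card_greedy_fst_le_mul Δ k M t
    rw [card_erase_of_mem hmem] at hstep
    rw [show M + 2 - t = M + 2 - (t + 1) + 1 by omega, pow_succ, mul_add_one] at hprev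
    set D := r ^ (M + 1).choose k
    set X := (D + 1) ^ (M + 2 - (t + 1))
    have hD : 0 < D := Nat.pow_pos (Δ ∅).pos
    have hX : 0 < X := Nat.pow_pos (Nat.succ_pos D)
    by_contra! hlt
    have : D * (greedy Δ k M (t + 1)).1.card + D ≤ D * X := by
      rw [← mul_add_one]; exact Nat.mul_le_mul_left D hlt
    rw [mul_comm X D] at hprev
    omega

lemma chosen_mem {t : ℕ} (ht : t ≤ M + 2) : chosen Δ k M t ∈ (greedy Δ k M t).1 :=
  chosen_mem_of_nonempty Δ k M
    (card_pos.1 ((Nat.pow_pos (Nat.succ_pos _)).trans_le (pow_le_card_greedy_fst Δ k M ht)))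

lemma chosen_lt {t : ℕ} (ht : t ≤ M + 2) : chosen Δ k M t < (r ^ (M + 1).choose k + 1) ^ (M + 2) :=
  mem_range.1 (greedy_fst_antitone Δ k M t.zero_le (chosen_mem Δ k M ht))

lemma chosen_strictMonoOn : StrictMonoOn (chosen Δ k M) (Set.Iic (M + 1)) :=
  strictMonoOn_Iic_of_lt_succ fun t ht => by
    have h := greedy_succ_fst_subset Δ k M t (chosen_mem Δ k M (by omega))
    exact lt_of_le_of_ne (Nat.sInf_le (mem_coe.2 (mem_of_mem_erase h))) (ne_of_mem_erase h).symm

lemma fingerprint_eq_of_mem {t c c' : ℕ} (hc : c ∈ (greedy Δ k M (t + 1)).1)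
    (hc' : c' ∈ (greedy Δ k M (t + 1)).1) :
    fingerprint Δ k M (greedy Δ k M (t + 1)).2 c = fingerprint Δ k M (greedy Δ k M (t + 1)).2 c' :=
  (mem_filter.1 hc).2.trans (mem_filter.1 hc').2.symm

/-- All chosen vertices after step `max I` share the fingerprint fixed at step `max I + 1`. -/
lemma chosen_endHomogeneous (hk : 1 ≤ k) {I : Finset ℕ} (hI : I.card = k) {j : ℕ}
    (hIj : ∀ i ∈ I, i < j) (hjM : j ≤ M) :
    Δ (insert (chosen Δ k M j) (I.image (chosen Δ k M))) =
      Δ (insert (chosen Δ k M M) (I.image (chosen Δ k M))) := by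
  have hIne : I.Nonempty := card_pos.1 (hI ▸ hk)
  have hmj := hIj _ (max'_mem I hIne)
  have hmem {j'} (hj' : I.max' hIne < j') (hj'M : j' ≤ M) :
      chosen Δ k M j' ∈ (greedy Δ k M (I.max' hIne + 1)).1 :=
    greedy_fst_antitone Δ k M hj' (chosen_mem Δ k M (by omega))
  have hImem : I ∈ powersetCard k (range (M + 1)) :=
    mem_powersetCard.2 ⟨fun i hi => mem_range.2 (by have := hIj i hi; omega), hI⟩
  have heval := congrFun (fingerprint_eq_of_mem Δ k M (hmem hmj hjM) (hmem (by omega) le_rfl))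
    ⟨I, hImem⟩
  have himage : I.image (greedy Δ k M (I.max' hIne + 1)).2 = I.image (chosen Δ k M) :=
    image_congr fun i hi => greedy_snd_of_lt Δ k M (Nat.lt_succ_of_le (le_max' I i hi))
  simpa [fingerprint, himage] using heval

end EndHomogeneous

theorem ForcesGoodPath.succ {r s k n M : ℕ} (hk : 1 ≤ k) (h : ForcesGoodPath r s k (n + 1) M) :
    ForcesGoodPath r s (k + 1) n ((r ^ (M + 1).choose k + 1) ^ (M + 2)) := by
  intro Δ
  set u := chosen Δ k M
  have hu := chosen_strictMonoOn Δ k M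
  obtain ⟨w, hwmono, hwlt, hwcol⟩ := h fun A => Δ (insert (u M) (A.image u))
  have hw : StrictMonoOn w (Set.Iic (n + k - 1)) :=
    strictMonoOn_Iic_of_lt_succ fun i hi => hwmono i (by omega)
  have hwM (i : ℕ) (hi : i ≤ n + k - 1) : w i ≤ M := (hwlt i (by omega)).le
  refine ⟨u ∘ w, fun i hi => ?_,
    fun i hi => chosen_lt Δ k M ((hwM i (by omega)).trans (by omega)), ?_⟩
  · exact hu (Set.mem_Iic.2 ((hwM i (by omega)).trans (by omega)))
      (Set.mem_Iic.2 ((hwM (i + 1) (by omega)).trans (by omega))) (hwmono i (by omega))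
  refine (card_le_card fun c hc => ?_).trans hwcol
  simp only [mem_image, mem_range] at hc ⊢
  obtain ⟨i, hi, rfl⟩ := hc
  refine ⟨i, by omega, ?_⟩
  have hedge : (Icc i (i + (k + 1) - 1)).image (u ∘ w) =
      insert (u (w (i + k))) (((Icc i (i + k - 1)).image w).image u) := by
    rw [image_image, show u (w (i + k)) = (u ∘ w) (i + k) from rfl, ← image_insert,
      show i + (k + 1) - 1 = i + k by omega]
    congr 1
    ext x
    simp only [mem_Icc, mem_insert]
    omega
  have hcard : ((Icc i (i + k - 1)).image w).card = k := by
    rw [card_image_of_injOn (hw.injOn.mono fun x hx => by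
      simp only [coe_Icc, Set.mem_Icc, Set.mem_Iic] at hx ⊢; omega)]
    simp only [Nat.card_Icc]
    omega
  have hlast : ∀ x ∈ (Icc i (i + k - 1)).image w, x < w (i + k) := by
    simp only [mem_image, mem_Icc]
    rintro _ ⟨x, hx, rfl⟩
    exact hw (Set.mem_Iic.2 (by omega)) (Set.mem_Iic.2 (by omega)) (by omega)
  rw [hedge, chosen_endHomogeneous Δ k M hk hcard hlast (hwM (i + k) (by omega))]

lemma le_choose_of_lt {r s : ℕ} (hs : 0 < s) (hsr : s < r) : r ≤ r.choose s := by
  obtain ⟨r, rfl⟩ : ∃ r', r = r' + 1 := ⟨r - 1, by omega⟩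
  obtain ⟨s, rfl⟩ : ∃ s', s = s' + 1 := ⟨s - 1, by omega⟩
  have hle : s + 1 ≤ r.choose s := by
    simpa using Nat.choose_le_choose s (show s + 1 ≤ r by omega)
  refine Nat.le_of_mul_le_mul_right ?_ (Nat.succ_pos s)
  rw [← Nat.add_one_mul_choose_eq]
  exact Nat.mul_le_mul_left _ hle

lemma add_one_pow_choose_le {r q M k : ℕ} (hr : r ≤ 2 ^ q) :
    (r ^ (M + 1).choose k + 1) ^ (M + 2) ≤ 2 ^ ((q + 1) * (M + 2) ^ (k + 1)) := by
  set C := (M + 1).choose k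
  have hC : C ≤ (M + 2) ^ k := (Nat.choose_le_pow _ _).trans (Nat.pow_le_pow_left (by omega) k)
  have hbase : r ^ C + 1 ≤ 2 ^ (q * C + 1) :=
    calc r ^ C + 1 ≤ 2 ^ (q * C) + 2 ^ (q * C) := by
          exact add_le_add (by rw [pow_mul]; exact Nat.pow_le_pow_left hr C) Nat.one_le_two_pow
      _ = 2 ^ (q * C + 1) := by ring
  calc (r ^ C + 1) ^ (M + 2) ≤ (2 ^ (q * C + 1)) ^ (M + 2) := Nat.pow_le_pow_left hbase _
    _ = 2 ^ ((q * C + 1) * (M + 2)) := (pow_mul _ _ _).symm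
    _ ≤ 2 ^ ((q + 1) * (M + 2) ^ (k + 1)) := by
      refine Nat.pow_le_pow_right two_pos ?_
      calc (q * C + 1) * (M + 2) ≤ (q * (M + 2) ^ k + (M + 2) ^ k) * (M + 2) :=
            Nat.mul_le_mul_right _
              (add_le_add (Nat.mul_le_mul_left q hC) (Nat.one_le_pow _ _ (by omega)))
        _ = (q + 1) * (M + 2) ^ (k + 1) := by ring

lemma pow_add_two_le_pow_succ {m e : ℕ} (hm : 2 ≤ m) (he : 1 ≤ e) : m ^ e + 2 ≤ m ^ (e + 1) := by
  have : m ≤ m ^ e := Nat.le_self_pow (by omega) m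
  rw [pow_succ]
  nlinarith

lemma pow_add_le_add_one_pow (m : ℕ) {W : ℕ} (hW : 2 ≤ W) : m ^ W + m ≤ (m + 1) ^ W := by
  obtain ⟨e, rfl⟩ : ∃ e, W = e + 2 := ⟨W - 2, by omega⟩
  have hm : m ≤ m ^ (e + 1) := Nat.le_self_pow (by omega) m
  calc m ^ (e + 2) + m ≤ m ^ (e + 1) * m + m ^ (e + 1) := by rw [pow_succ]; omega
    _ = m ^ (e + 1) * (m + 1) := by ring
    _ ≤ (m + 1) ^ (e + 1) * (m + 1) := Nat.mul_le_mul_right _ (Nat.pow_le_pow_left (by omega) _)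
    _ = (m + 1) ^ (e + 2) := (pow_succ _ _).symm

lemma succ_mul_add_two_pow_le {B X E : ℕ} (Q d : ℕ) (hB : 2 ≤ B) (hX : X + 2 ≤ B ^ E) :
    (Q + 1) * (X + 2) ^ d ≤ B ^ (Q + E * d) :=
  calc (Q + 1) * (X + 2) ^ d ≤ B ^ Q * (B ^ E) ^ d :=
        Nat.mul_le_mul (Nat.lt_two_pow_self.trans_le (Nat.pow_le_pow_left hB Q))
          (Nat.pow_le_pow_left hX d)
    _ = B ^ (Q + E * d) := by rw [pow_add, pow_mul]

/-- From height `2` on, a power of the tower costs only an additive change of its argument. -/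
lemma succ_mul_tower_add_two_pow_le {Q d z : ℕ} (i : ℕ) (hQ : Q ≤ z) (hd : d ≤ z) :
    (Q + 1) * (tower (i + 2) z + 2) ^ d ≤ tower (i + 2) (z + (d + 2)) := by
  set T := tower (i + 1) z
  have hzT : z ≤ T := le_tower _ z
  calc (Q + 1) * (2 ^ T + 2) ^ d ≤ 2 ^ (Q + (T + 1) * d) :=
        succ_mul_add_two_pow_le Q d le_rfl (pow_add_two_le_pow_succ le_rfl Nat.one_le_two_pow)
    _ ≤ 2 ^ ((d + 2) * T) := Nat.pow_le_pow_right two_pos (by nlinarith)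
    _ ≤ 2 ^ tower (i + 1) (z + (d + 2)) := Nat.pow_le_pow_right two_pos (mul_tower_succ_le i _ z)

/-- The exponent in `towerArg`: one value for each of the heights `0`, `1` and `≥ 2`, at which
the recursive bound is absorbed polynomially, exponentially and additively respectively. -/
def towerExponent (Q : ℕ) : ℕ → ℕ
  | 0 => Q + 2
  | 1 => 5 * Q + 12
  | _ + 2 => 5 * Q + 14

/-- The base grows with `j` so that `m ^ W + m ≤ (m + 1) ^ W` pays for the additive shifts. -/
def towerArg (Q j n : ℕ) : ℕ := (n + 2 * j) ^ towerExponent Q j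

lemma towerArg_one_le (Q : ℕ) {n : ℕ} (hn : 1 ≤ n) :
    (Q + 1) * (towerArg Q 0 (n + 1) + 2) ^ 4 ≤ towerArg Q 1 n := by
  simp only [towerArg, towerExponent, mul_zero, add_zero, mul_one]
  calc (Q + 1) * ((n + 1) ^ (Q + 2) + 2) ^ 4 ≤ (n + 1) ^ (Q + (Q + 2 + 1) * 4) :=
        succ_mul_add_two_pow_le Q 4 (by omega) (pow_add_two_le_pow_succ (by omega) (by omega))
    _ ≤ (n + 2) ^ (5 * Q + 12) := by
        rw [show Q + (Q + 2 + 1) * 4 = 5 * Q + 12 by ring]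
        exact Nat.pow_le_pow_left (by omega) _

lemma towerArg_two_le (Q : ℕ) {n : ℕ} :
    (Q + 1) * (2 ^ towerArg Q 1 (n + 1) + 2) ^ 5 ≤ 2 ^ towerArg Q 2 n := by
  norm_num only [towerArg, towerExponent]
  set y := (n + 1 + 2) ^ (5 * Q + 12)
  have hy : 5 * Q + 12 ≤ y := Nat.lt_two_pow_self.le.trans (Nat.pow_le_pow_left (by omega) _)
  calc (Q + 1) * (2 ^ y + 2) ^ 5 ≤ 2 ^ (Q + (y + 1) * 5) :=
        succ_mul_add_two_pow_le Q 5 le_rfl (pow_add_two_le_pow_succ le_rfl (by omega))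
    _ ≤ 2 ^ (n + 4) ^ (5 * Q + 14) := by
        refine Nat.pow_le_pow_right two_pos ?_
        have hyn : y ≤ (n + 4) ^ (5 * Q + 12) := Nat.pow_le_pow_left (by omega) _
        have h16 : 4 ^ 2 ≤ (n + 4) ^ 2 := Nat.pow_le_pow_left (by omega) 2
        rw [show 5 * Q + 14 = 5 * Q + 12 + 2 by ring, pow_add]
        nlinarith

lemma towerArg_add_three_le (Q i : ℕ) {n : ℕ} (hn : 3 ≤ n) :
    (Q + 1) * (tower (i + 2) (towerArg Q (i + 2) (n + 1)) + 2) ^ (i + 6) ≤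
      tower (i + 2) (towerArg Q (i + 3) n) := by
  set m := n + 2 * i + 5
  have hW : 2 ≤ towerExponent Q (i + 2) := by simp [towerExponent]
  have hz : m ≤ towerArg Q (i + 2) (n + 1) := by
    simpa [towerArg, m, show n + 1 + 2 * (i + 2) = m by ring] using
      Nat.le_self_pow (by omega : towerExponent Q (i + 2) ≠ 0) m
  have hQ : Q ≤ towerArg Q (i + 2) (n + 1) := by
    simp only [towerArg, towerExponent]
    exact Nat.lt_two_pow_self.le.trans ((Nat.pow_le_pow_right two_pos (by omega)).trans
      (Nat.pow_le_pow_left (by omega) _))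
  refine (succ_mul_tower_add_two_pow_le i hQ (by omega)).trans (tower_mono _ ?_)
  have := pow_add_le_add_one_pow m hW
  simp only [towerArg, towerExponent] at this ⊢
  rw [show n + 1 + 2 * (i + 2) = m by ring, show n + 2 * (i + 3) = m + 1 by ring]
  omega

lemma tower_step_le (Q j : ℕ) {n : ℕ} (hn : 3 ≤ n) :
    (Q + 1) * (tower j (towerArg Q j (n + 1)) + 2) ^ (j + 4) ≤ tower j (towerArg Q (j + 1) n) := by
  rcases j with _ | _ | i
  exacts [towerArg_one_le Q (by omega), towerArg_two_le Q, towerArg_add_three_le Q i hn]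

lemma towerArg_le {Q j n : ℕ} (hn : 3 ≤ n) (hj : j ≤ n) : towerArg Q j n ≤ n ^ (10 * Q + 28) := by
  have hexp : towerExponent Q j ≤ 5 * Q + 14 := by
    rcases j with _ | _ | _ <;> simp only [towerExponent] <;> omega
  calc (n + 2 * j) ^ towerExponent Q j ≤ (n ^ 2) ^ towerExponent Q j :=
        Nat.pow_le_pow_left (by nlinarith) _
    _ = n ^ (2 * towerExponent Q j) := (pow_mul _ _ _).symm
    _ ≤ n ^ (10 * Q + 28) := Nat.pow_le_pow_right (by omega) (by omega)

theorem forcesGoodPath_tower {r s : ℕ} (hs : 2 ≤ s) (hsr : s < r) (j : ℕ) {n : ℕ} (hn : 3 ≤ n) :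
    ForcesGoodPath r s (j + 3) n (tower j (towerArg (r.choose s) j n)) := by
  induction j generalizing n with
  | zero =>
    refine (forcesGoodPath_three hs hsr.le n).mono ?_
    simp only [tower, towerArg, towerExponent, mul_zero, add_zero, pow_add]
    have : 1 ≤ n ^ r.choose s := Nat.one_le_pow _ _ (by omega)
    have : 9 ≤ n ^ 2 := by nlinarith
    nlinarith
  | succ j ih =>
    have hr : r ≤ 2 ^ r.choose s := (le_choose_of_lt (by omega) hsr).trans Nat.lt_two_pow_self.le
    refine ((ih (n := n + 1) (by omega)).succ (by omega)).mono ?_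
    exact add_one_pow_choose_le hr |>.trans
      (Nat.pow_le_pow_right two_pos (tower_step_le (r.choose s) j hn))

lemma natCast_pow_le_rpow_mul_log {n Q : ℕ} (hn : 1 ≤ n) (hQ : 3 ≤ Q) :
    ((n ^ (10 * Q + 28) : ℕ) : ℝ) ≤ (n : ℝ) ^ (100 * (Q : ℝ) ^ 2 * Real.log Q) := by
  rw [Nat.cast_pow, ← Real.rpow_natCast]
  refine Real.rpow_le_rpow_of_exponent_le (by exact_mod_cast hn) ?_
  have hQ' : (3 : ℝ) ≤ Q := by exact_mod_cast hQ
  have hlog : 1 ≤ Real.log Q := by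
    rw [Real.le_log_iff_exp_le (by linarith)]
    linarith [Real.exp_one_lt_d9]
  push_cast
  nlinarith

end ColorAvoidingPaths

/-- **Main theorem.** There is an absolute constant `C > 0` such that for all
`n ≥ k ≥ 3` and `r > s > r/2`, we have
`A_k(n; r, s) ≤ T_{k-3}(n^(C · binom(r,s)² · log binom(r,s)))`. -/
theorem color_avoiding_paths_tower_bound :
    ∃ C : ℝ, 0 < C ∧
      ∀ n k r s : ℕ, 3 ≤ k → k ≤ n → s < r → r < 2 * s →
        (colorAvoidA k n r s : ℝ) ≤
          towerR (k - 3) ((n : ℝ) ^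
            (C * (Nat.choose r s : ℝ) ^ 2 * Real.log (Nat.choose r s))) := by
  open ColorAvoidingPaths in
  refine ⟨100, by norm_num, fun n k r s hk hkn hsr hrs => ?_⟩
  obtain ⟨j, rfl⟩ : ∃ j, k = j + 3 := ⟨k - 3, by omega⟩
  have hQ : 3 ≤ r.choose s := (show 3 ≤ r by omega).trans (le_choose_of_lt (by omega) hsr)
  have hA := colorAvoidA_le (forcesGoodPath_tower (by omega) hsr j (show 3 ≤ n by omega))
  rw [Nat.add_sub_cancel]
  calc (colorAvoidA (j + 3) n r s : ℝ) ≤ tower j (towerArg (r.choose s) j n) := by exact_mod_cast hA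
    _ ≤ tower j (n ^ (10 * r.choose s + 28)) := by
        exact_mod_cast tower_mono j (towerArg_le (by omega) (by omega))
    _ ≤ _ := natCast_tower_le_towerR j (natCast_pow_le_rpow_mul_log (by omega) hQ)
end

section
/- Let Δ be an r-coloring of [N]^(3) with no tight monotone path of length n using at most s colors, where s > r/2. Assign to each v ∈ [N] a set D(v) ⊆ [n]^{binom(r,s)} of size at most C·K·log K which is a dominating set of the K-majority tournament on S(v) = {P(u,v) : u < v} defined by the binom(r,s) cyclic lexicographic orders. Then the map v ↦ D(v) is injective. -/
/-- There is a tight monotone path of length `m` ending at `u, v` inside `[N]`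
(vertices identified with `{0, …, N-1}`) all of whose edges have colors in `S`. -/
def PathEndIn (N r : ℕ) (Δ : ℕ → ℕ → ℕ → Fin r) (S : Finset (Fin r))
    (m u v : ℕ) : Prop :=
  ∃ w : ℕ → ℕ, (∀ i < m + 1, w i < w (i + 1)) ∧ (∀ i ≤ m + 1, w i < N) ∧
    w m = u ∧ w (m + 1) = v ∧ ∀ i < m, Δ (w i) (w (i + 1)) (w (i + 2)) ∈ S

/-- `ℓ_S(u, v)`: the length of the longest tight monotone path ending at
`u, v` using only colors from `S`. -/
noncomputable def ellS (N r : ℕ) (Δ : ℕ → ℕ → ℕ → Fin r) (S : Finset (Fin r))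
    (u v : ℕ) : ℕ :=
  sSup {m | PathEndIn N r Δ S m u v}

/-- The vector `P(u, v) ∈ [n]^binom(r,s)`, whose coordinate indexed by the
`s`-element color set `E (j % B)` is `1 + ℓ_{E (j % B)}(u, v)`; coordinates are
indexed cyclically by naturals via the enumeration `E` of the `s`-sets. -/
noncomputable def Pvec (N r B : ℕ) (Δ : ℕ → ℕ → ℕ → Fin r)
    (E : ℕ → Finset (Fin r)) (u v : ℕ) : ℕ → ℕ :=
  fun j => 1 + ellS N r Δ (E (j % B)) u v

/-- The `i`-th cyclic lexicographic order on vectors with `B` coordinates: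
compare coordinates `i, i+1, …` cyclically, the coordinate `i` being most
significant. -/
def CyclicLex (B i : ℕ) (x y : ℕ → ℕ) : Prop :=
  ∃ t < B, (∀ j < t, x ((i + j) % B) = y ((i + j) % B)) ∧
    x ((i + t) % B) < y ((i + t) % B)

lemma pathEndIn_zero (N r : ℕ) (Δ : ℕ → ℕ → ℕ → Fin r) (S : Finset (Fin r))
    {u v : ℕ} (hu : u < v) (hv : v < N) : PathEndIn N r Δ S 0 u v := by
  refine ⟨fun i => if i = 0 then u else v, ?_, ?_, by simp, by simp, by omega⟩
  · intro i hi
    have : i = 0 := by omega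
    subst this; simpa using hu
  · intro i hi
    by_cases h : i = 0 <;> simp [h]
    · exact hu.trans hv
    · exact hv

lemma pathEndIn_extend (N r : ℕ) (Δ : ℕ → ℕ → ℕ → Fin r) (S : Finset (Fin r))
    {m u v v' : ℕ} (h : PathEndIn N r Δ S m u v) (hvv : v < v') (hv' : v' < N)
    (hc : Δ u v v' ∈ S) : PathEndIn N r Δ S (m + 1) v v' := by
  obtain ⟨w, h1, h2, h3, h4, h5⟩ := h
  refine ⟨fun i => if i ≤ m + 1 then w i else v', ?_, ?_, ?_, ?_, ?_⟩
  · intro i hi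
    by_cases h' : i + 1 ≤ m + 1
    · simp only [if_pos (by omega : i ≤ m + 1), if_pos h']
      exact h1 i (by omega)
    · have hieq : i = m + 1 := by omega
      subst hieq
      simp only [if_pos (le_refl _), if_neg h', h4]
      exact hvv
  · intro i hi
    by_cases h' : i ≤ m + 1
    · simp only [if_pos h']; exact h2 i h'
    · simp only [if_neg h']; exact hv'
  · simp [h4]
  · simp
  · intro i hi
    by_cases h' : i < m
    · simp only [if_pos (by omega : i ≤ m + 1), if_pos (by omega : i + 1 ≤ m + 1),
        if_pos (by omega : i + 2 ≤ m + 1)]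
      exact h5 i h'
    · have hieq : i = m := by omega
      rw [hieq]
      simp only [if_pos (by omega : m ≤ m + 1), if_pos (by omega : m + 1 ≤ m + 1),
        if_neg (by omega : ¬ m + 2 ≤ m + 1), h3, h4]
      exact hc

lemma pathEndIn_lt (n N r s : ℕ) (Δ : ℕ → ℕ → ℕ → Fin r)
    (hΔ : ∀ w : ℕ → ℕ, (∀ i < n + 1, w i < w (i + 1)) → (∀ i ≤ n + 1, w i < N) →
      s + 1 ≤ ((Finset.range n).image fun i => Δ (w i) (w (i + 1)) (w (i + 2))).card)
    (S : Finset (Fin r)) (hS : S.card ≤ s) {m u v : ℕ}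
    (h : PathEndIn N r Δ S m u v) : m < n := by
  by_contra hmn
  push_neg at hmn
  obtain ⟨w, h1, h2, _, _, h5⟩ := h
  have hb := hΔ w (fun i hi => h1 i (by omega)) (fun i hi => h2 i (by omega))
  have hsub : ((Finset.range n).image fun i => Δ (w i) (w (i + 1)) (w (i + 2))) ⊆ S := by
    intro x hx
    simp only [Finset.mem_image, Finset.mem_range] at hx
    obtain ⟨i, hi, rfl⟩ := hx
    exact h5 i (by omega)
  have := Finset.card_le_card hsub
  omega

lemma choose_half (r s K : ℕ) (hs : 0 < s) (hsr : s < r) (hrs : r < 2 * s)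
    (hodd : Odd (r.choose s) → r.choose s = 2 * K - 1)
    (heven : Even (r.choose s) → r.choose s = 2 * (K - 1)) :
    K ≤ (r - 1).choose (s - 1) ∧ r.choose s ≤ 2 * K - 1 ∧ 1 ≤ K := by
  have hG : 0 < (r - 1).choose (s - 1) := Nat.choose_pos (by omega)
  have hB : 0 < r.choose s := Nat.choose_pos (by omega)
  have hmul : r * (r - 1).choose (s - 1) = r.choose s * s := by
    have h := Nat.add_one_mul_choose_eq (r - 1) (s - 1)
    have h1 : r - 1 + 1 = r := by omega
    have h2 : s - 1 + 1 = s := by omega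
    simp only [Nat.succ_eq_add_one, h1, h2] at h
    exact h
  have hlt : r.choose s < 2 * (r - 1).choose (s - 1) := by
    have hx : r.choose s * s < (2 * (r - 1).choose (s - 1)) * s := by
      calc r.choose s * s = r * (r - 1).choose (s - 1) := hmul.symm
        _ < (2 * s) * (r - 1).choose (s - 1) := by
            exact Nat.mul_lt_mul_of_pos_right hrs hG
        _ = (2 * (r - 1).choose (s - 1)) * s := by ring
    exact lt_of_mul_lt_mul_right hx (Nat.zero_le s)
  rcases Nat.even_or_odd (r.choose s) with he | ho
  · have := heven he; omega
  · have := hodd ho; omega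

lemma card_filter_mem_powersetCard (r s : ℕ) (hs : 0 < s) (hsr : s ≤ r) (c : Fin r) :
    ((Finset.univ.powersetCard s : Finset (Finset (Fin r))).filter (fun S => c ∈ S)).card
      = (r - 1).choose (s - 1) := by
  classical
  have hsplit := Finset.card_filter_add_card_filter_not
    (s := (Finset.univ.powersetCard s : Finset (Finset (Fin r)))) (p := fun S => c ∈ S)
  have hneg : (Finset.univ.powersetCard s : Finset (Finset (Fin r))).filter (fun S => ¬ c ∈ S)
      = (Finset.univ.erase c).powersetCard s := by
    ext S
    simp only [Finset.mem_filter, Finset.mem_powersetCard, Finset.subset_erase]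
    constructor
    · rintro ⟨⟨h1, h2⟩, h3⟩; exact ⟨⟨h1, h3⟩, h2⟩
    · rintro ⟨⟨h1, h3⟩, h2⟩; exact ⟨⟨h1, h2⟩, h3⟩
  have hcard1 : ((Finset.univ.powersetCard s : Finset (Finset (Fin r)))).card = r.choose s := by
    simp [Finset.card_powersetCard]
  have hcard2 : ((Finset.univ.erase c).powersetCard s).card = (r - 1).choose s := by
    simp [Finset.card_powersetCard, Finset.card_erase_of_mem]
  have hpascal : r.choose s = (r - 1).choose (s - 1) + (r - 1).choose s := by
    have h := Nat.choose_succ_succ (r - 1) (s - 1)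
    have h1 : r - 1 + 1 = r := by omega
    have h2 : s - 1 + 1 = s := by omega
    simp only [Nat.succ_eq_add_one, h1, h2] at h
    exact h
  rw [hneg, hcard2] at hsplit
  omega

/-- **Injectivity of `Θ₂ : v ↦ D(v)`.** Let `Δ` be an `r`-coloring of the
triples of `[N]` with no tight monotone path of length `n` using at most `s`
colors, where `s > r/2`. Suppose each `v ∈ [N]` is assigned a set
`D v ⊆ S(v) = {P(u,v) : u < v}` of size at most `C·K·log K` which dominates
`S(v)` in the `K`-majority tournament determined by the `binom(r,s)` cyclic
lexicographic orders (together, in the even case, with an extra arbitrary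
asymmetric order among the `2K - 1` orders `ords`). Then `v ↦ D v` is
injective on `[N]`. -/
theorem theta_two_injective (n N r s K : ℕ) (C : ℝ)
    (hs : 0 < s) (hsr : s < r) (hrs : r < 2 * s)
    (hodd : Odd (Nat.choose r s) → Nat.choose r s = 2 * K - 1)
    (heven : Even (Nat.choose r s) → Nat.choose r s = 2 * (K - 1))
    (Δ : ℕ → ℕ → ℕ → Fin r)
    (hΔ : ∀ w : ℕ → ℕ, (∀ i < n + 1, w i < w (i + 1)) → (∀ i ≤ n + 1, w i < N) →
      s + 1 ≤ ((Finset.range n).image fun i => Δ (w i) (w (i + 1)) (w (i + 2))).card)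
    (E : ℕ → Finset (Fin r))
    (hE1 : ∀ i < Nat.choose r s, (E i).card = s)
    (hE2 : ∀ S : Finset (Fin r), S.card = s → ∃! i, i < Nat.choose r s ∧ E i = S)
    (ords : ℕ → (ℕ → ℕ) → (ℕ → ℕ) → Prop)
    (hords1 : ∀ i < Nat.choose r s, ords i = CyclicLex (Nat.choose r s) i)
    (hords2 : ∀ i < 2 * K - 1, ∀ x y : ℕ → ℕ, ¬ (ords i x y ∧ ords i y x))
    (D : ℕ → Finset (ℕ → ℕ))
    (hD1 : ∀ v < N, ∀ x ∈ D v, ∃ u < v, x = Pvec N r (Nat.choose r s) Δ E u v)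
    (hD2 : ∀ v < N, ((D v).card : ℝ) ≤ C * K * Real.log K)
    (hD3 : ∀ v < N, ∀ u < v, Pvec N r (Nat.choose r s) Δ E u v ∉ D v →
      ∃ x ∈ D v, K ≤
        {i | i < 2 * K - 1 ∧ ords i (Pvec N r (Nat.choose r s) Δ E u v) x}.ncard) :
    Set.InjOn D {v | v < N} := by
  classical
  set B := Nat.choose r s with hBdef
  have hB : 0 < B := Nat.choose_pos hsr.le
  obtain ⟨hKG, hB2K, hK1⟩ := choose_half r s K hs hsr hrs hodd heven
  -- number of coordinates whose color set contains a given color is ≥ K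
  have hGoodCard : ∀ c : Fin r,
      ((Finset.range B).filter (fun j => c ∈ E j)).card = (r - 1).choose (s - 1) := by
    intro c
    rw [← card_filter_mem_powersetCard r s hs hsr.le c]
    apply Finset.card_bij (fun j _ => E j)
    · intro j hj
      simp only [Finset.mem_filter, Finset.mem_range] at hj
      simp only [Finset.mem_filter, Finset.mem_powersetCard]
      exact ⟨⟨Finset.subset_univ _, hE1 j hj.1⟩, hj.2⟩
    · intro j1 h1 j2 h2 heq
      simp only [Finset.mem_filter, Finset.mem_range] at h1 h2
      obtain ⟨i, _, huniq⟩ := hE2 (E j1) (hE1 j1 h1.1)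
      have e1 := huniq j1 ⟨h1.1, rfl⟩
      have e2 := huniq j2 ⟨h2.1, heq.symm⟩
      omega
    · intro S hS
      simp only [Finset.mem_filter, Finset.mem_powersetCard] at hS
      obtain ⟨⟨_, hcard⟩, hc⟩ := hS
      obtain ⟨i, ⟨hi, hEi⟩, _⟩ := hE2 S hcard
      exact ⟨i, by simp [Finset.mem_filter, Finset.mem_range, hi, hEi, hc], hEi⟩
  -- key strict monotonicity of Pvec coordinates
  have key : ∀ u v v' : ℕ, u < v → v < v' → v' < N → ∀ j < B, Δ u v v' ∈ E j →
      Pvec N r B Δ E u v j < Pvec N r B Δ E v v' j := by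
    intro u v v' huv hvv' hv' j hj hc
    have hjm : j % B = j := Nat.mod_eq_of_lt hj
    have hScard : (E j).card ≤ s := le_of_eq (hE1 j hj)
    have hbdd1 : BddAbove {m | PathEndIn N r Δ (E j) m u v} :=
      ⟨n, fun m hm => (pathEndIn_lt n N r s Δ hΔ (E j) hScard hm).le⟩
    have hbdd2 : BddAbove {m | PathEndIn N r Δ (E j) m v v'} :=
      ⟨n, fun m hm => (pathEndIn_lt n N r s Δ hΔ (E j) hScard hm).le⟩
    have hne1 : {m | PathEndIn N r Δ (E j) m u v}.Nonempty :=
      ⟨0, pathEndIn_zero N r Δ (E j) huv (hvv'.trans hv')⟩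
    have hmem : PathEndIn N r Δ (E j) (ellS N r Δ (E j) u v) u v :=
      Nat.sSup_mem hne1 hbdd1
    have hext : PathEndIn N r Δ (E j) (ellS N r Δ (E j) u v + 1) v v' :=
      pathEndIn_extend N r Δ (E j) hmem hvv' hv' hc
    have hle : ellS N r Δ (E j) u v + 1 ≤ ellS N r Δ (E j) v v' :=
      le_csSup hbdd2 hext
    simp only [Pvec, hjm]
    omega
  -- main argument
  have mainkey : ∀ v1 v2 : ℕ, v1 < N → v2 < N → v1 < v2 → D v1 = D v2 → False := by
    intro v1 v2 hv1 hv2 hlt hDeq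
    set p := Pvec N r B Δ E v1 v2 with hp
    by_cases hpD : p ∈ D v2
    · -- p equals some Pvec u v1 with u < v1, contradiction on a coordinate containing c
      obtain ⟨u, hu, hx⟩ := hD1 v1 hv1 p (hDeq ▸ hpD)
      set c := Δ u v1 v2 with hc
      have hcardG : 0 < ((Finset.range B).filter (fun j => c ∈ E j)).card := by
        rw [hGoodCard c]
        exact Nat.choose_pos (by omega)
      obtain ⟨j, hj⟩ := Finset.card_pos.mp hcardG
      simp only [Finset.mem_filter, Finset.mem_range] at hj
      have := key u v1 v2 hu hlt hv2 j hj.1 hj.2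
      rw [← hx, ← hp] at this
      exact absurd this (lt_irrefl _)
    · -- p is dominated by some x ∈ D v2 = D v1
      obtain ⟨x, hxD, hKcard⟩ := hD3 v2 hv2 v1 hlt hpD
      obtain ⟨u, hu, hxval⟩ := hD1 v1 hv1 x (hDeq ▸ hxD)
      set c := Δ u v1 v2 with hc
      -- the set of orders where x loses to p
      have hwin : ∀ j ∈ (Finset.range B).filter (fun j => c ∈ E j), ords j x p := by
        intro j hj
        simp only [Finset.mem_filter, Finset.mem_range] at hj
        rw [hords1 j hj.1]
        refine ⟨0, hB, fun j' hj' => absurd hj' (by omega), ?_⟩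
        have : (j + 0) % B = j := by rw [Nat.add_zero]; exact Nat.mod_eq_of_lt hj.1
        rw [this, hxval]
        exact key u v1 v2 hu hlt hv2 j hj.1 hj.2
      set A := {i | i < 2 * K - 1 ∧ ords i p x} with hA
      set G := {i | i < 2 * K - 1 ∧ ords i x p} with hG
      have hAfin : A.Finite := Set.Finite.subset (Set.finite_Iio (2 * K - 1))
        (fun i hi => hi.1)
      have hGfin : G.Finite := Set.Finite.subset (Set.finite_Iio (2 * K - 1))
        (fun i hi => hi.1)
      have hdisj : Disjoint A G := by
        rw [Set.disjoint_left]
        rintro i ⟨hi, h1⟩ ⟨_, h2⟩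
        exact hords2 i hi p x ⟨h1, h2⟩
      have hGsub : ((Finset.range B).filter (fun j => c ∈ E j) : Set ℕ) ⊆ G := by
        intro j hj
        have hj' := hj
        simp only [Finset.coe_filter, Set.mem_setOf_eq, Finset.mem_range] at hj'
        exact ⟨by omega, hwin j (by simpa using hj)⟩
      have hKG' : K ≤ G.ncard := by
        calc K ≤ ((Finset.range B).filter (fun j => c ∈ E j)).card := by
              rw [hGoodCard c]; exact hKG
          _ = (((Finset.range B).filter (fun j => c ∈ E j) : Finset ℕ) : Set ℕ).ncard := by
              rw [Set.ncard_coe_finset]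
          _ ≤ G.ncard := Set.ncard_le_ncard hGsub hGfin
      have hunion : (A ∪ G).ncard = A.ncard + G.ncard :=
        Set.ncard_union_eq hdisj hAfin hGfin
      have hsub2 : A ∪ G ⊆ Set.Iio (2 * K - 1) := by
        rintro i (hi | hi) <;> exact hi.1
      have hle2 : (A ∪ G).ncard ≤ 2 * K - 1 := by
        have := Set.ncard_le_ncard hsub2 (Set.finite_Iio _)
        rwa [show (Set.Iio (2 * K - 1)).ncard = 2 * K - 1 by
          rw [← Finset.coe_range, Set.ncard_coe_finset, Finset.card_range]] at this
      omega
  intro v1 hv1 v2 hv2 hDeq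
  simp only [Set.mem_setOf_eq] at hv1 hv2
  by_contra hne
  rcases lt_or_gt_of_ne hne with h | h
  · exact mainkey v1 v2 hv1 hv2 h hDeq
  · exact mainkey v2 v1 hv2 hv1 h hDeq.symm
end

section
/- Let Δ be a 2-coloring of the triples of [N] with no monochromatic tight monotone path of length n (n ≥ 2). For u < v define P(u,v) = (1+ℓ_red(u,v), 1+ℓ_blue(u,v)) ∈ [n]², where ℓ_c(u,v) is the length of the longest tight monotone path of color c ending at u,v. Then the map v ↦ D(v) := { x ∈ [n]² : x ≤ P(u,v) for some u < v } (down-set closure in [n]²) is injective on {2,...,N}. -/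
/-- There is a tight monotone path of length `m`, all of whose edges have
color `c`, ending at `u, v` inside `[N]` (vertices identified with
`{0, …, N-1}`). -/
def MonoPathEnd (N : ℕ) (Δ : ℕ → ℕ → ℕ → Fin 2) (c : Fin 2) (m u v : ℕ) : Prop :=
  ∃ w : ℕ → ℕ, (∀ i < m + 1, w i < w (i + 1)) ∧ (∀ i ≤ m + 1, w i < N) ∧
    w m = u ∧ w (m + 1) = v ∧ ∀ i < m, Δ (w i) (w (i + 1)) (w (i + 2)) = c

/-- `ℓ_c(u, v)`: the length of the longest tight monotone path of color `c`
ending at `u, v`. -/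
noncomputable def ellC (N : ℕ) (Δ : ℕ → ℕ → ℕ → Fin 2) (c : Fin 2) (u v : ℕ) : ℕ :=
  sSup {m | MonoPathEnd N Δ c m u v}

/-- `D(v)`: the down-set closure in `[n]²` of the points
`P(u,v) = (1 + ℓ_red(u,v), 1 + ℓ_blue(u,v))` over all `u < v`. -/
noncomputable def downSetOf (N n : ℕ) (Δ : ℕ → ℕ → ℕ → Fin 2) (v : ℕ) :
    Set (ℕ × ℕ) :=
  {x | 1 ≤ x.1 ∧ x.1 ≤ n ∧ 1 ≤ x.2 ∧ x.2 ≤ n ∧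
    ∃ u < v, x.1 ≤ 1 + ellC N Δ 0 u v ∧ x.2 ≤ 1 + ellC N Δ 1 u v}

lemma mono_zero {N : ℕ} {Δ : ℕ → ℕ → ℕ → Fin 2} {c : Fin 2} {u v : ℕ}
    (huv : u < v) (hv : v < N) : MonoPathEnd N Δ c 0 u v := by
  refine ⟨fun i => if i = 0 then u else v, ?_, ?_, by simp, by simp, by omega⟩
  · intro i hi
    have : i = 0 := by omega
    simp [this, huv]
  · intro i hi
    dsimp only
    split <;> omega

lemma monoPath_bound {n N : ℕ} {Δ : ℕ → ℕ → ℕ → Fin 2}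
    (hΔ : ¬ ∃ (w : ℕ → ℕ) (c : Fin 2),
      (∀ i < n + 1, w i < w (i + 1)) ∧ (∀ i ≤ n + 1, w i < N) ∧
      ∀ i < n, Δ (w i) (w (i + 1)) (w (i + 2)) = c)
    {c : Fin 2} {m u v : ℕ} (h : MonoPathEnd N Δ c m u v) : m < n := by
  by_contra hm
  push_neg at hm
  obtain ⟨w, h1, h2, _, _, h5⟩ := h
  refine hΔ ⟨fun i => w (i + (m - n)), c, ?_, ?_, ?_⟩
  · intro i hi
    show w (i + (m - n)) < w (i + 1 + (m - n))
    have e : i + 1 + (m - n) = i + (m - n) + 1 := by omega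
    rw [e]
    exact h1 _ (by omega)
  · intro i hi
    exact h2 _ (by omega)
  · intro i hi
    show Δ (w (i + (m - n))) (w (i + 1 + (m - n))) (w (i + 2 + (m - n))) = c
    have e1 : i + 1 + (m - n) = i + (m - n) + 1 := by omega
    have e2 : i + 2 + (m - n) = i + (m - n) + 2 := by omega
    rw [e1, e2]
    exact h5 _ (by omega)

lemma ellC_mem {n N : ℕ} {Δ : ℕ → ℕ → ℕ → Fin 2}
    (hΔ : ¬ ∃ (w : ℕ → ℕ) (c : Fin 2),
      (∀ i < n + 1, w i < w (i + 1)) ∧ (∀ i ≤ n + 1, w i < N) ∧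
      ∀ i < n, Δ (w i) (w (i + 1)) (w (i + 2)) = c)
    {c : Fin 2} {u v : ℕ} (huv : u < v) (hv : v < N) :
    MonoPathEnd N Δ c (ellC N Δ c u v) u v := by
  have hne : {m | MonoPathEnd N Δ c m u v}.Nonempty := ⟨0, mono_zero huv hv⟩
  have hbdd : BddAbove {m | MonoPathEnd N Δ c m u v} :=
    ⟨n, fun m hm => (monoPath_bound hΔ hm).le⟩
  exact Nat.sSup_mem hne hbdd

lemma monoPath_extend {N : ℕ} {Δ : ℕ → ℕ → ℕ → Fin 2} {c : Fin 2} {m w u v : ℕ}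
    (h : MonoPathEnd N Δ c m w u) (huv : u < v) (hv : v < N) (hc : Δ w u v = c) :
    MonoPathEnd N Δ c (m + 1) u v := by
  obtain ⟨p, h1, h2, h3, h4, h5⟩ := h
  refine ⟨fun i => if i ≤ m + 1 then p i else v, ?_, ?_, ?_, ?_, ?_⟩
  · intro i hi
    by_cases hi1 : i + 1 ≤ m + 1
    · simp only [show i ≤ m + 1 by omega, hi1, if_true]
      exact h1 i (by omega)
    · have hie : i = m + 1 := by omega
      subst hie
      simp [h4, huv, show ¬ (m + 1 + 1 ≤ m + 1) by omega]
  · intro i hi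
    dsimp only
    split
    · exact h2 i (by omega)
    · exact hv
  · simp [h4]
  · simp
  · intro i hi
    by_cases him : i < m
    · simp only [show i ≤ m + 1 by omega, show i + 1 ≤ m + 1 by omega,
        show i + 2 ≤ m + 1 by omega, if_true]
      exact h5 i him
    · have hie : i = m := by omega
      subst hie
      simp only [show i ≤ i + 1 by omega, show i + 1 ≤ i + 1 by omega,
        show ¬ (i + 2 ≤ i + 1) by omega, if_true, if_false, h3, h4]
      exact hc

lemma ellC_succ {n N : ℕ} {Δ : ℕ → ℕ → ℕ → Fin 2}
    (hΔ : ¬ ∃ (w : ℕ → ℕ) (c : Fin 2),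
      (∀ i < n + 1, w i < w (i + 1)) ∧ (∀ i ≤ n + 1, w i < N) ∧
      ∀ i < n, Δ (w i) (w (i + 1)) (w (i + 2)) = c)
    {c : Fin 2} {w u v : ℕ} (hwu : w < u) (huv : u < v) (hv : v < N)
    (hc : Δ w u v = c) :
    ellC N Δ c w u + 1 ≤ ellC N Δ c u v := by
  have hmem := ellC_mem (c := c) hΔ hwu (huv.trans hv)
  have hext := monoPath_extend hmem huv hv hc
  have hbdd : BddAbove {m | MonoPathEnd N Δ c m u v} :=
    ⟨n, fun m hm => (monoPath_bound hΔ hm).le⟩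
  exact le_csSup hbdd hext

/-- **Seidenberg's argument in uniformity three.** If `Δ` is a 2-coloring of
the triples of `[N]` with no monochromatic tight monotone path of length `n`
(`n ≥ 2`), then the map `v ↦ D(v)` is injective on the elements of `[N]`
having a predecessor (i.e. `{2, …, N}` in 1-indexed notation). -/
theorem downSet_map_injective (n N : ℕ) (hn : 2 ≤ n) (Δ : ℕ → ℕ → ℕ → Fin 2)
    (hΔ : ¬ ∃ (w : ℕ → ℕ) (c : Fin 2),
      (∀ i < n + 1, w i < w (i + 1)) ∧ (∀ i ≤ n + 1, w i < N) ∧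
      ∀ i < n, Δ (w i) (w (i + 1)) (w (i + 2)) = c) :
    Set.InjOn (downSetOf N n Δ) {v | 1 ≤ v ∧ v < N} := by
  have fin2 : ∀ x : Fin 2, x = 0 ∨ x = 1 := by decide
  have key : ∀ u v : ℕ, v < N → u < v → downSetOf N n Δ u = downSetOf N n Δ v → False := by
    intro u v hvN huv heq
    have hb0 : ellC N Δ 0 u v < n := monoPath_bound hΔ (ellC_mem hΔ huv hvN)
    have hb1 : ellC N Δ 1 u v < n := monoPath_bound hΔ (ellC_mem hΔ huv hvN)
    have hP : (1 + ellC N Δ 0 u v, 1 + ellC N Δ 1 u v) ∈ downSetOf N n Δ v :=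
      ⟨by omega, by omega, by omega, by omega, u, huv, le_refl _, le_refl _⟩
    rw [← heq] at hP
    obtain ⟨-, -, -, -, w, hwu, h0, h1⟩ := hP
    rcases fin2 (Δ w u v) with hc | hc
    · have hs := ellC_succ hΔ hwu huv hvN hc
      omega
    · have hs := ellC_succ hΔ hwu huv hvN hc
      omega
  intro a ha b hb heq
  by_contra hne
  rcases lt_or_gt_of_ne hne with h | h
  · exact key a b hb.2 h heq
  · exact key b a ha.2 h heq.symm
end
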